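/- arXiv:2105.05250 — 12 statements merged into one kernel-verified Lean document; each statement's English description precedes it below -/
import Mathlib

section
/- There do not exist positive integers a, b, e with gcd(a,b)=1 such that (a²+b²)² + (ab)² = e². -/
lemma sq_mod8 (x : ℕ) : x^2 % 8 = 0 ∨ x^2 % 8 = 1 ∨ x^2 % 8 = 4 := by
  have h : x % 8 < 8 := Nat.mod_lt _ (by norm_num)
  have : x^2 % 8 = (x % 8)^2 % 8 := by rw [Nat.pow_mod]
  interval_cases h' : x % 8 <;> simp_all

lemma odd_sq_mod8 (x : ℕ) (hx : x % 2 = 1) : x^2 % 8 = 1 := by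
  have h : x % 8 < 8 := Nat.mod_lt _ (by norm_num)
  have h2 : x % 8 % 2 = 1 := by omega
  have : x^2 % 8 = (x % 8)^2 % 8 := by rw [Nat.pow_mod]
  interval_cases h' : x % 8 <;> simp_all

/-- natural number version of the coprime Pythagorean classification, odd leg first -/
lemma pyth_nat (x y z : ℕ) (h : x^2 + y^2 = z^2) (hco : Nat.gcd x y = 1)
    (hx : x % 2 = 1) (hy : 0 < y) :
    ∃ m n : ℕ, x + n^2 = m^2 ∧ y = 2*m*n ∧ z = m^2+n^2 ∧ Nat.gcd m n = 1 ∧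
      (m % 2 = 0 ∧ n % 2 = 1 ∨ m % 2 = 1 ∧ n % 2 = 0) := by
  have hz : 0 < z := by nlinarith [Nat.pos_of_ne_zero (by rintro rfl; omega : x ≠ 0)]
  have ht : PythagoreanTriple (x:ℤ) (y:ℤ) (z:ℤ) := by
    have := congrArg (fun t : ℕ => (t : ℤ)) h
    push_cast at this
    unfold PythagoreanTriple
    nlinarith [this]
  have hco' : Int.gcd (x:ℤ) (y:ℤ) = 1 := by
    rwa [Int.gcd_natCast_natCast]
  have hx' : (x:ℤ) % 2 = 1 := by omega
  obtain ⟨m, n, h1, h2, h3, h4, h5, h6⟩ :=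
    PythagoreanTriple.coprime_classification' ht hco' hx' (by exact_mod_cast hz)
  have hm0 : 0 < m := by
    rcases lt_or_eq_of_le h6 with h | h
    · exact h
    · exfalso
      rw [← h] at h1
      have hx1 : (1:ℤ) ≤ (x:ℤ) := by exact_mod_cast (by omega : 1 ≤ x)
      nlinarith [sq_nonneg n]
  have hn0 : 0 ≤ n := by
    by_contra hn
    push_neg at hn
    have : (y:ℤ) = 2*m*n := h2
    nlinarith [this, (by exact_mod_cast hy : (0:ℤ) < y)]
  refine ⟨m.toNat, n.toNat, ?_, ?_, ?_, ?_, ?_⟩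
  · have : (x:ℤ) + n^2 = m^2 := by linarith [h1]
    have hmm : ((m.toNat:ℤ)) = m := Int.toNat_of_nonneg h6
    have hnn : ((n.toNat:ℤ)) = n := Int.toNat_of_nonneg hn0
    zify; rw [hmm, hnn]; linarith
  · zify; rw [Int.toNat_of_nonneg h6, Int.toNat_of_nonneg hn0]; linarith [h2]
  · zify; rw [Int.toNat_of_nonneg h6, Int.toNat_of_nonneg hn0]; linarith [h3]
  · have ha : m.natAbs = m.toNat := by omega
    have hb : n.natAbs = n.toNat := by omega
    rw [Int.gcd, ha, hb] at h4
    exact h4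
  · rcases h5 with ⟨hm, hn⟩ | ⟨hm, hn⟩
    · left; constructor <;> omega
    · right; constructor <;> omega

theorem Qfalse : ∀ s : ℕ, ∀ p e t : ℕ, 0 < p → 0 < s → Nat.gcd p s = 1 →
    p^2 + s^2 = e^2 → 4*p^2 + t^2 = s^2 → False := by
  intro s
  induction s using Nat.strong_induction_on with
  | _ s IH =>
  intro p e t hp hs hco h1 h2
  -- Step 1: p is even
  have hpe : p % 2 = 0 := by
    by_contra hpo
    have hpo : p % 2 = 1 := by omega
    rcases Nat.even_or_odd s with hse | hso
    · -- s even
      have hse : s % 2 = 0 := Nat.even_iff.mp hse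
      have hte : t % 2 = 0 := by
        by_contra hto
        have ht8 := odd_sq_mod8 t (by omega)
        have hp8 := odd_sq_mod8 p hpo
        have hs8 := sq_mod8 s
        omega
      obtain ⟨σ, rfl⟩ : 2 ∣ s := by omega
      obtain ⟨τ, rfl⟩ : 2 ∣ t := by omega
      have e1 : (2*τ)^2 = 4*τ^2 := by ring
      have e2 : (2*σ)^2 = 4*σ^2 := by ring
      have h2' : p^2 + τ^2 = σ^2 := by omega
      rcases Nat.even_or_odd τ with hτ | hτ
      · have hτe : τ % 2 = 0 := Nat.even_iff.mp hτ
        have hτ8 : τ^2 % 8 = 0 ∨ τ^2 % 8 = 4 := by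
          obtain ⟨w, rfl⟩ : 2 ∣ τ := by omega
          have hw : (2*w)^2 = 4*w^2 := by ring
          have := sq_mod8 w
          omega
        have hp8 := odd_sq_mod8 p hpo
        have hσo : σ % 2 = 1 := by
          by_contra hσe
          obtain ⟨w, rfl⟩ : 2 ∣ σ := by omega
          have hw : (2*w)^2 = 4*w^2 := by ring
          have := sq_mod8 w
          omega
        have hσ8 := odd_sq_mod8 σ hσo
        have he8 := sq_mod8 e
        omega
      · have hτ8 := odd_sq_mod8 τ (Nat.odd_iff.mp hτ)
        have hp8 := odd_sq_mod8 p hpo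
        have hσ8 := sq_mod8 σ
        omega
    · -- s odd : p²+s² ≡ 2 mod 8
      have hp8 := odd_sq_mod8 p hpo
      have hs8 := odd_sq_mod8 s (Nat.odd_iff.mp hso)
      have he8 := sq_mod8 e
      omega
  have hso : s % 2 = 1 := by
    rcases Nat.even_or_odd s with hse | hso
    · exfalso
      have hse : s % 2 = 0 := Nat.even_iff.mp hse
      have : 2 ∣ Nat.gcd p s := Nat.dvd_gcd (by omega) (by omega)
      omega
    · exact Nat.odd_iff.mp hso
  -- Parametrize eq1 : s² + p² = e²  (s odd)
  obtain ⟨m, n, hmn1, hmn2, hmn3, hmnco, hmnpar⟩ :=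
    pyth_nat s p e (by linarith) (by rw [Nat.gcd_comm]; exact hco) hso hp
  have hn0 : 0 < n := by
    rcases Nat.eq_zero_or_pos n with rfl | hh
    · simp at hmn2; omega
    · exact hh
  have hm0 : 0 < m := by
    rcases Nat.eq_zero_or_pos m with rfl | hh
    · simp at hmn2; omega
    · exact hh
  have hnm : n < m := by
    by_contra hc
    push_neg at hc
    have : m^2 ≤ n^2 := Nat.pow_le_pow_left hc 2
    omega
  -- Parametrize eq2 : t² + (2p)² = s²
  have hto : t % 2 = 1 := by
    by_contra hte
    have ht4 : t^2 % 4 = 0 := by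
      obtain ⟨w, rfl⟩ : 2 ∣ t := by omega
      have hw : (2*w)^2 = 4*w^2 := by ring
      omega
    have hs8 := odd_sq_mod8 s hso
    omega
  have hco2 : Nat.gcd t (2*p) = 1 := by
    have c1 : Nat.Coprime (2*p) s :=
      Nat.Coprime.mul (Nat.coprime_two_left.mpr (Nat.odd_iff.mpr hso)) hco
    have c2 : Nat.Coprime (2*p) (s^2) := c1.pow_right 2
    have c3 : Nat.Coprime (2*p) (t^2) := by
      have e3 : (2*p)*(2*p) = 4*p^2 := by ring
      have hseq : s^2 = t^2 + (2*p)*(2*p) := by omega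
      rw [hseq] at c2
      exact (Nat.coprime_add_mul_left_right (2*p) (t^2) (2*p)).mp c2
    have c4 : Nat.Coprime (2*p) t := (Nat.coprime_pow_right_iff (by norm_num) _ _).mp c3
    exact c4.symm
  have h2'' : t^2 + (2*p)^2 = s^2 := by
    have e3 : (2*p)^2 = 4*p^2 := by ring
    omega
  obtain ⟨k₀, l₀, hkl1, hkl2, hkl3, hklco, hklpar⟩ :=
    pyth_nat t (2*p) s h2'' hco2 hto (by omega)
  -- make k odd, l even (wlog)
  obtain ⟨k, l, hklp, hkls, hklco', hkodd, hleven⟩ :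
      ∃ k l, p = k*l ∧ s = k^2+l^2 ∧ Nat.Coprime k l ∧ k % 2 = 1 ∧ l % 2 = 0 := by
    have e4 : 2*k₀*l₀ = 2*(k₀*l₀) := by ring
    have hpkl : p = k₀ * l₀ := by omega
    rcases hklpar with ⟨hk0, hl0⟩ | ⟨hk0, hl0⟩
    · exact ⟨l₀, k₀, by rw [hpkl, Nat.mul_comm], by omega, Nat.coprime_comm.mp hklco, hl0, hk0⟩
    · exact ⟨k₀, l₀, hpkl, hkl3, hklco, hk0, hl0⟩
  obtain ⟨c, rfl⟩ : 2 ∣ l := by omega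
  have hk0 : 0 < k := by omega
  have hc0 : 0 < c := by
    rcases Nat.eq_zero_or_pos c with rfl | hh
    · simp at hklp; omega
    · exact hh
  have hkc : k * c = m * n := by
    have e5 : k*(2*c) = 2*(k*c) := by ring
    have e6 : 2*m*n = 2*(m*n) := by ring
    omega
  -- m odd, n even
  have hmno : m % 2 = 1 ∧ n % 2 = 0 := by
    rcases hmnpar with ⟨hm2, hn2⟩ | hh
    · exfalso
      have hk8 := odd_sq_mod8 k hkodd
      have hn8 := odd_sq_mod8 n hn2
      have hm4 : m^2 % 4 = 0 := by
        obtain ⟨w, rfl⟩ : 2 ∣ m := by omega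
        have hw : (2*w)^2 = 4*w^2 := by ring
        omega
      have hw2 : (2*c)^2 = 4*c^2 := by ring
      omega
    · exact hh
  -- split k, m, n via gcds
  have hk_dvd : k ∣ m * n := ⟨c, hkc.symm⟩
  obtain ⟨g, h, u, v, hk, hm, hn⟩ : ∃ g h u v, k = g*h ∧ m = g*u ∧ n = h*v := by
    refine ⟨Nat.gcd k m, Nat.gcd k n, m / Nat.gcd k m, n / Nat.gcd k n, ?_, ?_, ?_⟩
    · exact (Nat.gcd_eq_left hk_dvd).symm.trans (Nat.Coprime.gcd_mul k hmnco)
    · exact (Nat.mul_div_cancel' (Nat.gcd_dvd_right k m)).symm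
    · exact (Nat.mul_div_cancel' (Nat.gcd_dvd_right k n)).symm
  subst hk hm hn
  -- c = u*v
  have hcuv : c = u * v := by
    have hid : (g*u) * (h*v) = (g*h) * (u*v) := by ring
    have h7 : (g*h) * c = (g*h) * (u*v) := by omega
    exact Nat.eq_of_mul_eq_mul_left (by positivity) h7
  subst hcuv
  -- positivity and parity of pieces
  have hg0 : 0 < g := by
    rcases Nat.eq_zero_or_pos g with rfl | hh
    · simp at hk0
    · exact hh
  have hh0 : 0 < h := by
    rcases Nat.eq_zero_or_pos h with rfl | hh
    · simp at hk0
    · exact hh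
  have hu0 : 0 < u := by
    rcases Nat.eq_zero_or_pos u with rfl | hh
    · simp at hm0
    · exact hh
  have hv0 : 0 < v := by
    rcases Nat.eq_zero_or_pos v with rfl | hh
    · simp at hn0
    · exact hh
  have hgh_odd := Nat.odd_mul.mp (Nat.odd_iff.mpr hkodd)
  have hgodd : g % 2 = 1 := Nat.odd_iff.mp hgh_odd.1
  have hhodd : h % 2 = 1 := Nat.odd_iff.mp hgh_odd.2
  have hguodd := Nat.odd_mul.mp (Nat.odd_iff.mpr hmno.1)
  have huodd : u % 2 = 1 := Nat.odd_iff.mp hguodd.2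
  -- coprimality
  have c_uh : Nat.Coprime u h :=
    Nat.Coprime.coprime_dvd_right (dvd_mul_right h v)
      (Nat.Coprime.coprime_dvd_left (dvd_mul_left u g) hmnco)
  have c_gv : Nat.Coprime g v :=
    Nat.Coprime.coprime_dvd_right (dvd_mul_left v h)
      (Nat.Coprime.coprime_dvd_left (dvd_mul_right g u) hmnco)
  -- the key equation
  have key : v^2*(4*u^2+h^2) + g^2*h^2 = g^2*u^2 := by
    have e7 : v^2*(4*u^2+h^2) + g^2*h^2 = (g*h)^2 + (2*(u*v))^2 + (h*v)^2 := by ring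
    have e8 : g^2*u^2 = (g*u)^2 := by ring
    omega
  have hge : g^2*h^2 ≤ g^2*u^2 := by omega
  have hhu : h^2 ≤ u^2 := Nat.le_of_mul_le_mul_left hge (by positivity)
  have hsub : v^2*(4*u^2+h^2) = g^2*(u^2-h^2) := by
    zify [hhu]
    have keyz : (v:ℤ)^2*(4*(u:ℤ)^2+(h:ℤ)^2) + (g:ℤ)^2*(h:ℤ)^2 = (g:ℤ)^2*(u:ℤ)^2 := by
      exact_mod_cast key
    linear_combination keyz
  have hdvd2 : g^2 ∣ 4*u^2+h^2 :=
    Nat.Coprime.dvd_of_dvd_mul_left (Nat.Coprime.pow 2 2 c_gv) ⟨u^2-h^2, hsub⟩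
  obtain ⟨j, hj⟩ := hdvd2
  have hu2 : u^2 = h^2 + v^2*j := by
    have key' := key
    rw [hj] at key'
    have e9 : g^2*(h^2+v^2*j) = g^2*h^2 + v^2*(g^2*j) := by ring
    have h9 : g^2*(h^2+v^2*j) = g^2*u^2 := by omega
    exact Nat.eq_of_mul_eq_mul_left (by positivity) h9.symm
  have hj0 : 0 < j := by
    rcases Nat.eq_zero_or_pos j with rfl | hh
    · rw [Nat.mul_zero] at hj
      have : 0 < u^2 := by positivity
      omega
    · exact hh
  have hju : j ∣ 5*u^2 := by
    refine ⟨g^2+v^2, ?_⟩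
    have e10 : j*(g^2+v^2) = g^2*j + v^2*j := by ring
    omega
  have hjh : j ∣ 5*h^2 := by
    have e11 : 5*h^2 + 4*(v^2*j) = g^2*j := by omega
    have e12 : 5*h^2 = g^2*j - 4*(v^2*j) := by omega
    rw [e12]
    exact Nat.dvd_sub ⟨g^2, by ring⟩ ⟨4*v^2, by ring⟩
  have hj5 : j ∣ 5 := by
    have hgcd : Nat.gcd (5*u^2) (5*h^2) = 5 := by
      rw [Nat.gcd_mul_left, Nat.Coprime.gcd_eq_one (Nat.Coprime.pow 2 2 c_uh), Nat.mul_one]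
    have := Nat.dvd_gcd hju hjh
    rwa [hgcd] at this
  rcases (by norm_num : Nat.Prime 5).eq_one_or_self_of_dvd j hj5 with hj1 | hj5'
  · -- j = 1 : mod 8 contradiction
    subst hj1
    rw [Nat.mul_one] at hj
    have hu8 := odd_sq_mod8 u huodd
    have hh8 := odd_sq_mod8 h hhodd
    have hg8 := sq_mod8 g
    omega
  · -- j = 5 : descent
    subst hj5'
    have hg2 : g^2 = h^2 + 4*v^2 := by omega
    have hveq : v^2 + g^2 = u^2 := by omega
    have hgs : g < s := by
      have hN1 : 0 < h*v := Nat.mul_pos hh0 hv0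
      have hNM : h*v + 1 ≤ g*u := hnm
      have hml : g*u < s := by
        have A : (h*v+1)*(g*u) ≤ (g*u)*(g*u) := Nat.mul_le_mul hNM (le_refl _)
        have B : (h*v)*(h*v) < (g*u)*(h*v) := mul_lt_mul_of_pos_right hnm hN1
        have e13 : (h*v)^2 = (h*v)*(h*v) := by ring
        have e14 : (g*u)^2 = (g*u)*(g*u) := by ring
        have e15 : (h*v+1)*(g*u) = (h*v)*(g*u) + g*u := by ring
        have e16 : (g*u)*(h*v) = (h*v)*(g*u) := by ring
        omega
      have : g ≤ g*u := Nat.le_mul_of_pos_right g hu0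
      omega
    exact IH g hgs v u h hv0 hg0 c_gv.symm hveq (by omega)

theorem stmt_0 :
    ¬ ∃ a b e : ℕ, 0 < a ∧ 0 < b ∧ 0 < e ∧ Nat.gcd a b = 1 ∧
      (a ^ 2 + b ^ 2) ^ 2 + (a * b) ^ 2 = e ^ 2 := by
  rintro ⟨a, b, e, ha, hb, he, hg, heq⟩
  obtain ⟨t, ht⟩ : ∃ t, 4*(a*b)^2 + t^2 = (a^2+b^2)^2 := by
    rcases le_total b a with hba | hab
    · refine ⟨a^2 - b^2, ?_⟩
      have h2 : b^2 ≤ a^2 := Nat.pow_le_pow_left hba 2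
      zify [h2]
      ring
    · refine ⟨b^2 - a^2, ?_⟩
      have h2 : a^2 ≤ b^2 := Nat.pow_le_pow_left hab 2
      zify [h2]
      ring
  have hcop : Nat.gcd (a*b) (a^2+b^2) = 1 := by
    have ca : Nat.Coprime a (a^2+b^2) := by
      have : Nat.Coprime a (b^2 + a*a) :=
        (Nat.coprime_add_mul_left_right a (b^2) a).mpr ((Nat.coprime_pow_right_iff
          (by norm_num) a b).mpr hg)
      have e1 : b^2 + a*a = a^2 + b^2 := by ring
      rwa [e1] at this
    have cb : Nat.Coprime b (a^2+b^2) := by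
      have : Nat.Coprime b (a^2 + b*b) :=
        (Nat.coprime_add_mul_left_right b (a^2) b).mpr ((Nat.coprime_pow_right_iff
          (by norm_num) b a).mpr (Nat.coprime_comm.mp hg))
      have e1 : a^2 + b*b = a^2 + b^2 := by ring
      rwa [e1] at this
    exact Nat.Coprime.mul ca cb
  exact Qfalse (a^2+b^2) (a*b) e t (by positivity) (by positivity) hcop (by omega) ht
end

section
/- There do not exist positive integers a, b, e with gcd(a,b)=1 such that (a²+b²)² + (2ab)² = e². -/
/-!
If `a = b` then `a = b = 1` and `e² = 8`. Otherwise `e⁴ - (a² - b²)⁴ = (4ab(a² + b²))²` with both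
`a² - b²` and `4ab(a² + b²)` nonzero, so it suffices that `x⁴ - y⁴ = z²` has no solution with
`y z ≠ 0`, which is Fermat's descent. For a primitive solution with `y` odd, the primitive
Pythagorean triple `(y², z, x²)` has parameters `m > n > 0` with `m⁴ - n⁴ = (x y)²` and `m < x`.
With `y` even, the triple `(z, y², x²)` gives `v⁴ + 4u⁴ = x²`, and the triple `(v², 2u², x)` then
gives `p⁴ - q⁴ = v²` with `p < x`.
-/

namespace Int

theorem exists_pos_sq_of_isCoprime_of_mul_eq_sq {a b c : ℤ} (h : IsCoprime a b) (ha : 0 < a)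
    (hab : a * b = c ^ 2) : ∃ p, 0 < p ∧ a = p ^ 2 := by
  obtain ⟨p, hp | hp⟩ := sq_of_isCoprime h hab
  · have hp0 : p ≠ 0 := by rintro rfl; simp_all
    exact ⟨|p|, abs_pos.mpr hp0, by rw [sq_abs, hp]⟩
  · nlinarith [sq_nonneg p]

theorem exists_eq_two_mul_sq_of_mul_eq_two_mul_sq {m n w : ℤ} (h : IsCoprime m n) (hm : 0 < m)
    (hn : 0 < n) (hm2 : Even m) (hmn : m * n = 2 * w ^ 2) :
    ∃ u v, 0 < u ∧ m = 2 * u ^ 2 ∧ n = v ^ 2 := by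
  obtain ⟨k, rfl⟩ := hm2
  have hk : IsCoprime k n := (show IsCoprime (2 * k) n by rwa [two_mul]).of_mul_left_right
  have hkn : k * n = w ^ 2 := by linarith
  obtain ⟨u, hu, rfl⟩ := exists_pos_sq_of_isCoprime_of_mul_eq_sq hk (by omega) hkn
  obtain ⟨v, -, rfl⟩ :=
    exists_pos_sq_of_isCoprime_of_mul_eq_sq (c := w) hk.symm hn (by linear_combination hkn)
  exact ⟨u, v, hu, by ring, rfl⟩

end Int

structure PrimitiveQuarticDiff (x y z : ℤ) : Prop where
  pos : 0 < x
  isCoprime : IsCoprime x y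
  y_ne_zero : y ≠ 0
  z_ne_zero : z ≠ 0
  eq : x ^ 4 - y ^ 4 = z ^ 2

namespace PrimitiveQuarticDiff

variable {x y z : ℤ}

theorem isCoprime_y_z (h : PrimitiveQuarticDiff x y z) : IsCoprime y z := by
  have : IsCoprime (y ^ 4) (x ^ 4 + y ^ 4 * (-1)) := h.isCoprime.symm.pow.add_mul_left_right _
  rw [mul_neg_one, ← sub_eq_add_neg, h.eq] at this
  exact (IsCoprime.pow_iff (by norm_num) (by norm_num)).mp this

theorem descent_of_odd (h : PrimitiveQuarticDiff x y z) (hy : Odd y) :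
    ∃ x' y' z', PrimitiveQuarticDiff x' y' z' ∧ x' < x := by
  have ht : PythagoreanTriple (y ^ 2) z (x ^ 2) := by
    unfold PythagoreanTriple; linear_combination -h.eq
  have hco : Int.gcd (y ^ 2) z = 1 :=
    Int.isCoprime_iff_gcd_eq_one.mp h.isCoprime_y_z.pow_left
  obtain ⟨m, n, hy2, hz, hx2, hmn, -, hm⟩ :=
    ht.coprime_classification' hco (Int.odd_iff.mp hy.pow) (by positivity [h.pos])
  have hmn0 : m * n ≠ 0 := by
    intro h0; apply h.z_ne_zero; rw [hz]; linear_combination 2 * h0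
  have hm0 : 0 < m := lt_of_le_of_ne hm (left_ne_zero_of_mul hmn0).symm
  refine ⟨m, n, x * y, ⟨hm0, Int.isCoprime_iff_gcd_eq_one.mpr hmn, right_ne_zero_of_mul hmn0,
    mul_ne_zero h.pos.ne' h.y_ne_zero, ?_⟩, ?_⟩
  · linear_combination -(y ^ 2 * hx2 + (m ^ 2 + n ^ 2) * hy2)
  · have : 0 < n ^ 2 := by positivity [right_ne_zero_of_mul hmn0]
    nlinarith [h.pos]

theorem exists_lt_of_pow_four_add_four_mul_pow_four_eq_sq {u v : ℤ} (hx : 0 < x) (hu : u ≠ 0)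
    (hco : IsCoprime (v ^ 2) (2 * u ^ 2)) (h : v ^ 4 + 4 * u ^ 4 = x ^ 2) :
    ∃ p q, PrimitiveQuarticDiff p q v ∧ p < x := by
  have hv : Odd (v ^ 2) := Int.isCoprime_two_right.mp hco.of_mul_right_left
  have ht : PythagoreanTriple (v ^ 2) (2 * u ^ 2) x := by
    unfold PythagoreanTriple; linear_combination h
  obtain ⟨r, s, hv2, hu2, rfl, hrs, -, hr⟩ :=
    ht.coprime_classification' (Int.isCoprime_iff_gcd_eq_one.mp hco) (Int.odd_iff.mp hv) hx
  have hrs' : r * s = u ^ 2 := by linarith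
  have hr0 : 0 < r := hr.lt_of_ne (by rintro rfl; exact hu (by simpa using hrs'.symm))
  have hs0 : 0 < s := pos_of_mul_pos_right (by rw [hrs']; positivity) hr0.le
  have hrs : IsCoprime r s := Int.isCoprime_iff_gcd_eq_one.mpr hrs
  obtain ⟨p, hp, rfl⟩ := Int.exists_pos_sq_of_isCoprime_of_mul_eq_sq hrs hr0 hrs'
  obtain ⟨q, hq, rfl⟩ :=
    Int.exists_pos_sq_of_isCoprime_of_mul_eq_sq (c := u) hrs.symm hs0 (by linear_combination hrs')
  refine ⟨p, q, ⟨hp, (IsCoprime.pow_iff two_pos two_pos).mp hrs, hq.ne', ?_, ?_⟩, ?_⟩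
  · rintro rfl; simp at hv
  · linear_combination -hv2
  · nlinarith [pow_pos hq 4, le_self_pow₀ (show 1 ≤ p by omega) (show 4 ≠ 0 by norm_num)]

theorem exists_pow_four_add_four_mul_pow_four_eq_sq_of_even (h : PrimitiveQuarticDiff x y z)
    (hy : Even y) :
    ∃ u v, u ≠ 0 ∧ IsCoprime (v ^ 2) (2 * u ^ 2) ∧ v ^ 4 + 4 * u ^ 4 = x ^ 2 := by
  have hyz := h.isCoprime_y_z
  have hz : Odd z :=
    Int.isCoprime_two_left.mp (hyz.of_isCoprime_of_dvd_left (even_iff_two_dvd.mp hy))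
  have ht : PythagoreanTriple z (y ^ 2) (x ^ 2) := by
    unfold PythagoreanTriple; linear_combination -h.eq
  obtain ⟨m, n, -, hy2, hx2, hmn, hpar, hm⟩ :=
    ht.coprime_classification' (Int.isCoprime_iff_gcd_eq_one.mp hyz.symm.pow_right)
      (Int.odd_iff.mp hz) (by positivity [h.pos])
  obtain ⟨w, rfl⟩ := hy
  have hmnw : m * n = 2 * w ^ 2 := by linarith
  have hw : w ≠ 0 := by rintro rfl; exact h.y_ne_zero (by simp)
  have hm0 : 0 < m := hm.lt_of_ne (by rintro rfl; exact hw (by simpa using hmnw.symm))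
  have hn0 : 0 < n := pos_of_mul_pos_right (by rw [hmnw]; positivity) hm
  have hmn : IsCoprime m n := Int.isCoprime_iff_gcd_eq_one.mpr hmn
  rcases hpar with ⟨hm2, -⟩ | ⟨-, hn2⟩
  · obtain ⟨u, v, hu, rfl, rfl⟩ :=
      Int.exists_eq_two_mul_sq_of_mul_eq_two_mul_sq hmn hm0 hn0 (Int.even_iff.mpr hm2) hmnw
    exact ⟨u, v, hu.ne', hmn.symm, by linear_combination -hx2⟩
  · obtain ⟨u, v, hu, rfl, rfl⟩ :=
      Int.exists_eq_two_mul_sq_of_mul_eq_two_mul_sq (w := w) hmn.symm hn0 hm0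
        (Int.even_iff.mpr hn2) (by linear_combination hmnw)
    exact ⟨u, v, hu.ne', hmn, by linear_combination -hx2⟩

theorem descent (h : PrimitiveQuarticDiff x y z) :
    ∃ x' y' z', PrimitiveQuarticDiff x' y' z' ∧ x' < x := by
  rcases y.even_or_odd with hy | hy
  · obtain ⟨u, v, hu, hco, huv⟩ := h.exists_pow_four_add_four_mul_pow_four_eq_sq_of_even hy
    obtain ⟨p, q, hpq, hp⟩ := exists_lt_of_pow_four_add_four_mul_pow_four_eq_sq h.pos hu hco huv
    exact ⟨p, q, v, hpq, hp⟩
  · exact h.descent_of_odd hy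

end PrimitiveQuarticDiff

theorem not_primitiveQuarticDiff (x y z : ℤ) : ¬ PrimitiveQuarticDiff x y z := by
  induction hn : x.toNat using Nat.strong_induction_on generalizing x y z with
  | _ n ih =>
    intro h
    obtain ⟨x', y', z', h', hlt⟩ := h.descent
    have hx' := h'.pos
    exact ih x'.toNat (by omega) x' y' z' rfl h'

theorem Int.pow_four_sub_pow_four_ne_sq {x y z : ℤ} (hy : y ≠ 0) (hz : z ≠ 0) :
    x ^ 4 - y ^ 4 ≠ z ^ 2 := by
  intro h
  wlog hx : 0 < x generalizing x
  · rcases (not_lt.mp hx).lt_or_eq with hx | rfl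
    · exact this (by rwa [Even.neg_pow (by decide)]) (neg_pos.mpr hx)
    · nlinarith [pow_pos (sq_pos_of_ne_zero hy) 2, sq_nonneg z]
  obtain ⟨g, x, y, hg, hxy, rfl, rfl⟩ :=
    Int.exists_gcd_one' (Int.gcd_pos_of_ne_zero_left y hx.ne')
  have hg : (0 : ℤ) < g := by exact_mod_cast hg
  obtain ⟨z, rfl⟩ : (g : ℤ) ^ 2 ∣ z := by
    rw [← Int.pow_dvd_pow_iff two_ne_zero]
    exact Dvd.intro (x ^ 4 - y ^ 4) (by rw [← h]; ring)
  refine not_primitiveQuarticDiff x y z ⟨pos_of_mul_pos_left hx hg.le,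
    Int.isCoprime_iff_gcd_eq_one.mpr hxy, left_ne_zero_of_mul hy, right_ne_zero_of_mul hz, ?_⟩
  exact mul_left_cancel₀ (pow_ne_zero 4 hg.ne') (by linear_combination h)

theorem stmt_1 :
    ¬ ∃ a b e : ℕ, 0 < a ∧ 0 < b ∧ 0 < e ∧ Nat.gcd a b = 1 ∧
      (a ^ 2 + b ^ 2) ^ 2 + (2 * a * b) ^ 2 = e ^ 2 := by
  rintro ⟨a, b, e, ha, hb, -, hab, h⟩
  rcases eq_or_ne a b with rfl | hne
  · obtain rfl : a = 1 := by rwa [Nat.gcd_self] at hab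
    have : e ≤ 3 := by nlinarith
    interval_cases e <;> simp_all
  · have hsq : (a : ℤ) ^ 2 - b ^ 2 ≠ 0 := by
      rw [sub_ne_zero]; exact_mod_cast (Nat.pow_left_injective two_ne_zero).ne hne
    apply Int.pow_four_sub_pow_four_ne_sq (x := e) hsq (z := 4 * a * b * (a ^ 2 + b ^ 2))
      (by positivity)
    have h : ((a : ℤ) ^ 2 + b ^ 2) ^ 2 + (2 * a * b) ^ 2 = e ^ 2 := by exact_mod_cast h
    linear_combination (-(e : ℤ) ^ 2 - ((a ^ 2 + b ^ 2) ^ 2 + (2 * a * b) ^ 2)) * h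
end

section
/- If P is a point on a diagonal of a unit square, then the four distances from P to the vertices of the square cannot all be rational. -/
theorem stmt_3 (x y : ℝ)
    (hx : 0 ≤ x ∧ x ≤ 1)
    (hdiag : y = x ∨ y = 1 - x) :
    ¬ ((∃ q : ℚ, (q : ℝ) = Real.sqrt (x ^ 2 + y ^ 2)) ∧
       (∃ q : ℚ, (q : ℝ) = Real.sqrt ((x - 1) ^ 2 + y ^ 2)) ∧
       (∃ q : ℚ, (q : ℝ) = Real.sqrt ((x - 1) ^ 2 + (y - 1) ^ 2)) ∧
       (∃ q : ℚ, (q : ℝ) = Real.sqrt (x ^ 2 + (y - 1) ^ 2))) := by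
  rintro ⟨⟨q1, hq1⟩, ⟨q2, hq2⟩, ⟨q3, hq3⟩, ⟨q4, hq4⟩⟩
  obtain ⟨hx0, hx1⟩ := hx
  have h2 : Irrational (Real.sqrt 2) := irrational_sqrt_two
  rcases hdiag with h | h
  · subst h
    have e1 : Real.sqrt (y ^ 2 + y ^ 2) = y * Real.sqrt 2 := by
      rw [show y ^ 2 + y ^ 2 = y ^ 2 * 2 by ring, Real.sqrt_mul (sq_nonneg y),
        Real.sqrt_sq hx0]
    have e3 : Real.sqrt ((y - 1) ^ 2 + (y - 1) ^ 2) = (1 - y) * Real.sqrt 2 := by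
      rw [show (y - 1) ^ 2 + (y - 1) ^ 2 = (1 - y) ^ 2 * 2 by ring,
        Real.sqrt_mul (sq_nonneg _), Real.sqrt_sq (by linarith)]
    exact h2 ⟨q1 + q3, by push_cast; rw [hq1, hq3, e1, e3]; ring⟩
  · subst h
    have e4 : Real.sqrt (x ^ 2 + (1 - x - 1) ^ 2) = x * Real.sqrt 2 := by
      rw [show x ^ 2 + (1 - x - 1) ^ 2 = x ^ 2 * 2 by ring, Real.sqrt_mul (sq_nonneg x),
        Real.sqrt_sq hx0]
    have e2 : Real.sqrt ((x - 1) ^ 2 + (1 - x) ^ 2) = (1 - x) * Real.sqrt 2 := by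
      rw [show (x - 1) ^ 2 + (1 - x) ^ 2 = (1 - x) ^ 2 * 2 by ring,
        Real.sqrt_mul (sq_nonneg _), Real.sqrt_sq (by linarith)]
    exact h2 ⟨q4 + q2, by push_cast; rw [hq4, hq2, e4, e2]; ring⟩
end

section
/- If P is a point on a midline of a unit square (the segment joining midpoints of two opposite sides), then the four distances from P to the vertices cannot all be rational. -/
/-!
On the midline `x = 1/2` at height `y`, twice the distances to `(0,0)` and `(0,1)` satisfy
`a² = (u + 1)² + 1` and `b² = (u - 1)² + 1` with `u = 2y - 1 = (a² - b²) / 4`, so if both are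
rational then `u⁴ + 4 = (ab)²` in `ℚ`. For `u = 0` this needs `a² = 2`; otherwise clearing
denominators gives a primitive solution of `m⁴ + 4n⁴ = c²` with `mn ≠ 0`, which Fermat's descent
rules out. For `m` even, `(n, m/2, c/2)` is a smaller solution. For `m` odd, `(c ∓ m²) / 2` are
coprime fourth powers `s⁴, t⁴`, so `m² + (s²)² = (t²)²`, and the parametrisation of this
Pythagorean triple yields a primitive solution with `c` replaced by `t`, where `|t| ≤ t⁴ < c`.
-/

theorem Int.exists_pow_eq_of_mul_eq_pow_of_pos {a b c : ℤ} {k : ℕ} (hab : IsCoprime a b)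
    (ha : 0 < a) (h : a * b = c ^ k) : ∃ d, a = d ^ k := by
  obtain ⟨d, hd⟩ := exists_associated_pow_of_mul_eq_pow' hab h
  refine ⟨|d|, ?_⟩
  rw [← abs_pow, ← abs_of_pos ha, Int.abs_eq_natAbs, Int.abs_eq_natAbs,
    Int.associated_iff_natAbs.mp hd]

structure IsPrimitiveSolution (m n c : ℤ) : Prop where
  left_ne_zero : m ≠ 0
  right_ne_zero : n ≠ 0
  isCoprime : IsCoprime m n
  eq : m ^ 4 + 4 * n ^ 4 = c ^ 2

namespace IsPrimitiveSolution

variable {m n c : ℤ}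

theorem abs (h : IsPrimitiveSolution m n c) : IsPrimitiveSolution m n |c| :=
  { h with eq := by rw [sq_abs]; exact h.eq }

theorem ne_zero (h : IsPrimitiveSolution m n c) : c ≠ 0 := by
  rintro rfl
  have : 0 < m ^ 4 + 4 * n ^ 4 := by have := h.left_ne_zero; positivity
  simp [h.eq] at this

theorem exists_smaller_of_even (h : IsPrimitiveSolution m n c) (hm : Even m) :
    ∃ m' n' c', IsPrimitiveSolution m' n' c' ∧ c'.natAbs < c.natAbs := by
  obtain ⟨k, rfl⟩ := hm
  obtain ⟨d, rfl⟩ : Even c :=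
    (Int.even_pow' two_ne_zero).mp ⟨8 * k ^ 4 + 2 * n ^ 4, by rw [← h.eq]; ring⟩
  have hk : k ≠ 0 := by rintro rfl; exact h.left_ne_zero (add_zero 0)
  have hd := h.ne_zero
  have hcop : IsCoprime n (2 * k) := by rw [two_mul]; exact h.isCoprime.symm
  exact ⟨n, k, d, ⟨h.right_ne_zero, hk, hcop.of_mul_right_right, by linarith [h.eq]⟩,
    by omega⟩

theorem exists_sq_add_pow_four_eq_pow_four (h : IsPrimitiveSolution m n c) (hm : Odd m)
    (hc : 0 < c) :
    ∃ s t : ℤ, s ≠ 0 ∧ IsCoprime m s ∧ m ^ 2 + s ^ 4 = t ^ 4 ∧ t ^ 4 < c := by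
  have hcodd : Odd c := by
    refine (Int.odd_pow' two_ne_zero).mp ?_
    rw [← h.eq]
    exact hm.pow.add_even ⟨2 * n ^ 4, by ring⟩
  obtain ⟨a, ha⟩ := hcodd.sub_odd (hm.pow (n := 2))
  obtain ⟨b, hb⟩ := hcodd.add_odd (hm.pow (n := 2))
  have hab : a * b = n ^ 4 := by nlinarith [h.eq]
  have hba : b - a = m ^ 2 := by linarith
  have hcop : IsCoprime a b := by
    obtain ⟨x, y, hxy⟩ := (h.isCoprime.pow (m := 2) (n := 4))
    exact ⟨-x + y * b, x, by linear_combination hxy + x * hba + y * hab⟩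
  have hmc : m ^ 2 < c := by
    have : 0 < n ^ 4 := by have := h.right_ne_zero; positivity
    nlinarith [h.eq]
  have ha0 : 0 < a := by linarith
  obtain ⟨s, rfl⟩ := Int.exists_pow_eq_of_mul_eq_pow_of_pos hcop ha0 hab
  obtain ⟨t, rfl⟩ := Int.exists_pow_eq_of_mul_eq_pow_of_pos hcop.symm (by nlinarith)
    (by rw [mul_comm, hab])
  have hms : IsCoprime m (s ^ 4 * t ^ 4) := hab ▸ h.isCoprime.pow_right
  refine ⟨s, t, ?_, (IsCoprime.pow_right_iff four_pos).mp hms.of_mul_right_left, by linarith,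
    by linarith⟩
  rintro rfl
  simp at ha0

theorem exists_of_sq_eq_two_mul_of_even {p q s t : ℤ} (hcop : IsCoprime p q) (hp : 0 < p)
    (hq : 0 < q) (hpe : Even p) (hs : s ^ 2 = 2 * p * q) (ht : t ^ 2 = p ^ 2 + q ^ 2) :
    ∃ u v, IsPrimitiveSolution u v t := by
  obtain ⟨r, rfl⟩ := hpe
  obtain ⟨w, rfl⟩ : Even s := (Int.even_pow' two_ne_zero).mp ⟨2 * r * q, by rw [hs]; ring⟩
  have hrq : IsCoprime r q := (two_mul r ▸ hcop).of_mul_left_right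
  obtain ⟨v, rfl⟩ := Int.exists_pow_eq_of_mul_eq_pow_of_pos hrq (by linarith) (c := w) (k := 2)
    (by linarith)
  obtain ⟨u, rfl⟩ := Int.exists_pow_eq_of_mul_eq_pow_of_pos hrq.symm hq (c := w) (k := 2)
    (by linarith)
  refine ⟨u, v, ⟨?_, ?_, ?_, by linarith⟩⟩
  · rintro rfl; simp at hq
  · rintro rfl; simp at hp
  · exact ((IsCoprime.pow_iff two_pos two_pos).mp hrq).symm

theorem exists_of_sq_add_pow_four_eq_pow_four {m s t : ℤ} (hm : Odd m) (hs : s ≠ 0)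
    (hcop : IsCoprime m s) (h : m ^ 2 + s ^ 4 = t ^ 4) : ∃ u v, IsPrimitiveSolution u v t := by
  have htriple : PythagoreanTriple m (s ^ 2) (t ^ 2) := by
    unfold PythagoreanTriple; linear_combination h
  have hgcd : Int.gcd m (s ^ 2) = 1 := Int.isCoprime_iff_gcd_eq_one.mp hcop.pow_right
  have ht : 0 < t ^ 2 := by
    have : t ≠ 0 := by
      rintro rfl
      have : 0 < s ^ 4 := by positivity
      nlinarith [sq_nonneg m]
    positivity
  obtain ⟨p, q, -, hs2, ht2, hgcdpq, hpar, hp⟩ :=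
    htriple.coprime_classification' hgcd (Int.odd_iff.mp hm) ht
  have hpq0 : 0 < p * q := by
    have : 0 < s ^ 2 := by positivity
    linarith
  have hp0 : 0 < p := lt_of_le_of_ne hp (by rintro rfl; simp at hpq0)
  have hq0 : 0 < q := pos_of_mul_pos_right hpq0 hp
  have hpq : IsCoprime p q := Int.isCoprime_iff_gcd_eq_one.mpr hgcdpq
  rcases hpar with ⟨hpe, -⟩ | ⟨-, hqe⟩
  · exact exists_of_sq_eq_two_mul_of_even hpq hp0 hq0 (Int.even_iff.mpr hpe) hs2 ht2
  · exact exists_of_sq_eq_two_mul_of_even hpq.symm hq0 hp0 (Int.even_iff.mpr hqe)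
      (by rw [hs2]; ring) (by rw [ht2]; ring)

theorem exists_smaller (h : IsPrimitiveSolution m n c) :
    ∃ m' n' c', IsPrimitiveSolution m' n' c' ∧ c'.natAbs < c.natAbs := by
  rcases Int.even_or_odd m with hm | hm
  · exact h.exists_smaller_of_even hm
  have hc : 0 < |c| := abs_pos.mpr h.ne_zero
  obtain ⟨s, t, hs, hms, hmst, htc⟩ := h.abs.exists_sq_add_pow_four_eq_pow_four hm hc
  obtain ⟨u, v, huv⟩ := exists_of_sq_add_pow_four_eq_pow_four hm hs hms hmst
  refine ⟨u, v, t, huv, ?_⟩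
  have : |t| ≤ t ^ 4 := by
    rw [← Even.pow_abs ⟨2, rfl⟩]
    exact le_self_pow₀ (Int.one_le_abs huv.ne_zero) four_ne_zero
  zify
  linarith

end IsPrimitiveSolution

theorem not_isPrimitiveSolution (m n c : ℤ) : ¬ IsPrimitiveSolution m n c := fun h =>
  have ⟨m', n', c', h', _⟩ := h.exists_smaller
  not_isPrimitiveSolution m' n' c' h'
termination_by c.natAbs

theorem Rat.pow_four_add_four_ne_sq {u w : ℚ} (hu : u ≠ 0) : u ^ 4 + 4 ≠ w ^ 2 := by
  intro h
  have hsq : IsSquare ((u.num ^ 4 + 4 * u.den ^ 4 : ℤ) : ℚ) := by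
    refine ⟨w * u.den ^ 2, ?_⟩
    rw [← Rat.num_div_den u] at h
    field_simp at h
    push_cast
    linear_combination h
  obtain ⟨c, hc⟩ := Rat.isSquare_intCast_iff.mp hsq
  exact not_isPrimitiveSolution u.num u.den c
    ⟨Rat.num_ne_zero.mpr hu, by positivity, u.isCoprime_num_den, by rw [hc]; ring⟩

theorem Rat.not_isSquare_add_one_sq_add_one_and_sub_one_sq_add_one (u : ℚ) :
    ¬ (IsSquare ((u + 1) ^ 2 + 1) ∧ IsSquare ((u - 1) ^ 2 + 1)) := by
  rintro ⟨⟨a, ha⟩, ⟨b, hb⟩⟩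
  rcases eq_or_ne u 0 with rfl | hu
  · exact absurd ⟨a, by rw [← ha]; norm_num⟩ (by norm_num : ¬ IsSquare (2 : ℚ))
  · exact Rat.pow_four_add_four_ne_sq hu (w := a * b)
      (by rw [show u ^ 4 + 4 = ((u + 1) ^ 2 + 1) * ((u - 1) ^ 2 + 1) by ring, ha, hb]; ring)

theorem irrational_sqrt_quarter_add_sq_or_sub_one_sq (t : ℝ) :
    Irrational √((1 / 2) ^ 2 + t ^ 2) ∨ Irrational √((1 / 2) ^ 2 + (t - 1) ^ 2) := by
  rw [or_iff_not_and_not, Irrational, Irrational, not_not, not_not]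
  rintro ⟨⟨a, ha⟩, b, hb⟩
  have ha2 : (a : ℝ) ^ 2 = (1 / 2) ^ 2 + t ^ 2 := by rw [ha, Real.sq_sqrt (by positivity)]
  have hb2 : (b : ℝ) ^ 2 = (1 / 2) ^ 2 + (t - 1) ^ 2 := by rw [hb, Real.sq_sqrt (by positivity)]
  have hab : (a : ℝ) ^ 2 - b ^ 2 = 2 * t - 1 := by rw [ha2, hb2]; ring
  refine Rat.not_isSquare_add_one_sq_add_one_and_sub_one_sq_add_one (a ^ 2 - b ^ 2)
    ⟨⟨2 * a, Rat.cast_injective (α := ℝ) ?_⟩, ⟨2 * b, Rat.cast_injective (α := ℝ) ?_⟩⟩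
  · push_cast
    rw [hab]
    linear_combination (-4) * ha2
  · push_cast
    rw [hab]
    linear_combination (-4) * hb2

theorem stmt_4 (x y : ℝ)
    (hmid : (x = 1 / 2 ∧ 0 ≤ y ∧ y ≤ 1) ∨ (y = 1 / 2 ∧ 0 ≤ x ∧ x ≤ 1)) :
    ¬ ((∃ q : ℚ, (q : ℝ) = Real.sqrt (x ^ 2 + y ^ 2)) ∧
       (∃ q : ℚ, (q : ℝ) = Real.sqrt ((x - 1) ^ 2 + y ^ 2)) ∧
       (∃ q : ℚ, (q : ℝ) = Real.sqrt ((x - 1) ^ 2 + (y - 1) ^ 2)) ∧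
       (∃ q : ℚ, (q : ℝ) = Real.sqrt (x ^ 2 + (y - 1) ^ 2))) := by
  rintro ⟨h₁, h₂, -, h₄⟩
  rcases hmid with ⟨rfl, -⟩ | ⟨rfl, -⟩
  · exact (irrational_sqrt_quarter_add_sq_or_sub_one_sq y).elim (· h₁) (· h₄)
  · rw [add_comm] at h₁ h₂
    exact (irrational_sqrt_quarter_add_sq_or_sub_one_sq x).elim (· h₁) (· h₂)
end

section
/- If a point P in the plane has rational distances to all four vertices of the unit square with vertices (0,0), (1,0), (1,1), (0,1), then both coordinates of P are rational. -/
theorem stmt_5 (x y : ℝ)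
    (h1 : ∃ q : ℚ, (q : ℝ) = Real.sqrt (x ^ 2 + y ^ 2))
    (h2 : ∃ q : ℚ, (q : ℝ) = Real.sqrt ((x - 1) ^ 2 + y ^ 2))
    (h3 : ∃ q : ℚ, (q : ℝ) = Real.sqrt ((x - 1) ^ 2 + (y - 1) ^ 2))
    (h4 : ∃ q : ℚ, (q : ℝ) = Real.sqrt (x ^ 2 + (y - 1) ^ 2)) :
    (∃ qx : ℚ, (qx : ℝ) = x) ∧ (∃ qy : ℚ, (qy : ℝ) = y) := by
  obtain ⟨a, ha⟩ := h1
  obtain ⟨b, hb⟩ := h2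
  obtain ⟨d, hd⟩ := h4
  have h1' : ((a : ℝ)) ^ 2 = x ^ 2 + y ^ 2 := by
    rw [ha, Real.sq_sqrt (by positivity)]
  have h2' : ((b : ℝ)) ^ 2 = (x - 1) ^ 2 + y ^ 2 := by
    rw [hb, Real.sq_sqrt (by positivity)]
  have h4' : ((d : ℝ)) ^ 2 = x ^ 2 + (y - 1) ^ 2 := by
    rw [hd, Real.sq_sqrt (by positivity)]
  refine ⟨⟨(a ^ 2 - b ^ 2 + 1) / 2, ?_⟩, ⟨(a ^ 2 - d ^ 2 + 1) / 2, ?_⟩⟩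
  · push_cast
    nlinarith [h1', h2']
  · push_cast
    nlinarith [h1', h4']
end

section
/- Suppose x, y, z are positive integers with x² + y² a perfect square, x² + (z−y)² a perfect square, (z−x)² + y² a perfect square, and (z−x)² + (z−y)² a perfect square, with gcd(x,y,z)=1. Then z is even and exactly one of x, y is even. -/
/-!
Squares are `0` or `1` mod `4`, so a sum of two odd squares (`≡ 2 mod 4`) is never a square.
Hence in each of the four Pythagorean pairs at least one leg is even. If `x` and `y` had the
same parity, this would force `z` even as well, contradicting `gcd(x, y, z) = 1`; once exactly
one of `x`, `y` is even, the pairs involving `z - x` and `z - y` force `z` to be even.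
-/

lemma even_or_even_of_sq_add_sq_eq_sq {a b : ℤ} (h : ∃ r : ℤ, a ^ 2 + b ^ 2 = r ^ 2) :
    Even a ∨ Even b := by
  obtain ⟨r, hr⟩ := h
  by_contra! hab
  have ha := Int.sq_mod_four_eq_one_of_odd (Int.not_even_iff_odd.mp hab.1)
  have hb := Int.sq_mod_four_eq_one_of_odd (Int.not_even_iff_odd.mp hab.2)
  rcases Int.even_or_odd r with ⟨k, rfl⟩ | hr'
  · have : (k + k) ^ 2 = 4 * k ^ 2 := by ring
    omega
  · have := Int.sq_mod_four_eq_one_of_odd hr'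
    omega

lemma not_all_even_of_gcd_eq_one {x y z : ℤ} (h : Int.gcd x (Int.gcd y z) = 1) :
    ¬ (Even x ∧ Even y ∧ Even z) := by
  rintro ⟨hx, hy, hz⟩
  have := Int.dvd_coe_gcd (even_iff_two_dvd.mp hx)
    (Int.dvd_coe_gcd (even_iff_two_dvd.mp hy) (even_iff_two_dvd.mp hz))
  rw [h] at this
  norm_num at this

theorem stmt_8_general (x y z : ℤ)
    (h1 : ∃ r : ℤ, x ^ 2 + y ^ 2 = r ^ 2)
    (h2 : ∃ r : ℤ, x ^ 2 + (z - y) ^ 2 = r ^ 2)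
    (h3 : ∃ r : ℤ, (z - x) ^ 2 + y ^ 2 = r ^ 2)
    (h4 : ∃ r : ℤ, (z - x) ^ 2 + (z - y) ^ 2 = r ^ 2)
    (hgcd : Int.gcd x (Int.gcd y z) = 1) :
    Even z ∧ ((Even x ∧ Odd y) ∨ (Odd x ∧ Even y)) := by
  have e1 := even_or_even_of_sq_add_sq_eq_sq h1
  have e2 := even_or_even_of_sq_add_sq_eq_sq h2
  have e3 := even_or_even_of_sq_add_sq_eq_sq h3
  have e4 := even_or_even_of_sq_add_sq_eq_sq h4
  have hxyz := not_all_even_of_gcd_eq_one hgcd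
  simp only [Int.even_iff, Int.odd_iff] at e1 e2 e3 e4 hxyz ⊢
  omega

theorem stmt_8 (x y z : ℤ) (hx : 0 < x) (hy : 0 < y) (hz : 0 < z)
    (h1 : ∃ r : ℤ, x ^ 2 + y ^ 2 = r ^ 2)
    (h2 : ∃ r : ℤ, x ^ 2 + (z - y) ^ 2 = r ^ 2)
    (h3 : ∃ r : ℤ, (z - x) ^ 2 + y ^ 2 = r ^ 2)
    (h4 : ∃ r : ℤ, (z - x) ^ 2 + (z - y) ^ 2 = r ^ 2)
    (hgcd : Int.gcd x (Int.gcd y z) = 1) :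
    Even z ∧ ((Even x ∧ Odd y) ∨ (Odd x ∧ Even y)) :=
  stmt_8_general x y z h1 h2 h3 h4 hgcd
end

section
/- There do not exist coprime positive integers a, b with a even and b odd such that there exist odd coprime positive integers c, d satisfying 2abcd = (a² + b²)(c² − d²). -/
/-!
Coprimality of `2ab` with `a² + b²` and of `cd` with `c² - d²` forces `cd = a² + b²` and
`c² - d² = 2ab`, so `f = (c² + d²) / 2` satisfies `f² = (ab)² + (a² + b²)² = a⁴ + 3a²b² + b⁴`.
This quartic is never a square for coprime nonzero `a`, `b`, by descent. If `a` is even,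
`(a² + b², ab, f)` is a primitive Pythagorean triple; parametrizing it by `m, n` and splitting
`(a / 2) b = m n` as `(k l) (p q) = (k p) (l q)` gives `k² (p² - 4 l²) = q² (p² + l²)`, hence
`p² - 4 l² = δ q²` and `p² + l² = δ k²` with `δ ∣ 5`. The case `δ = 5` is impossible modulo 8,
and for `δ = 1` the primitive triple `(q, 2 l, p)` yields `g⁴ + 3 g² h² + h⁴ = k²` with
`|k| < |f|`. If `a` and `b` are both odd, the quartic is `5` modulo 8.
-/

lemma Int.sq_cast_zmod_eight_of_odd {x : ℤ} (hx : Odd x) : (x : ZMod 8) ^ 2 = 1 := by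
  obtain ⟨k, rfl⟩ := hx
  push_cast
  generalize (k : ZMod 8) = t
  revert t
  decide

lemma IsCoprime.mul_sq_add_sq {R : Type*} [CommRing R] {a b : R} (h : IsCoprime a b) :
    IsCoprime (a * b) (a ^ 2 + b ^ 2) := by
  refine IsCoprime.mul_left ?_ ?_
  · simpa [sq, add_comm] using h.pow_right (n := 2) |>.add_mul_left_right a
  · simpa [sq] using h.symm.pow_right (n := 2) |>.add_mul_left_right b

lemma IsCoprime.mul_sq_sub_sq {R : Type*} [CommRing R] {a b : R} (h : IsCoprime a b) :
    IsCoprime (a * b) (a ^ 2 - b ^ 2) := by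
  refine IsCoprime.mul_left ?_ ?_
  · simpa [sq, sub_eq_add_neg, add_comm] using
      h.pow_right (n := 2) |>.neg_right.add_mul_left_right a
  · simpa [sq, sub_eq_add_neg] using h.symm.pow_right (n := 2) |>.add_mul_left_right (-b)

lemma IsCoprime.exists_eq_mul_of_mul_eq_mul {R : Type*} [CommRing R] [IsDomain R] {u v x y : R}
    (huv : IsCoprime u v) (hv : v ≠ 0) (h : u * x = v * y) : ∃ δ, x = v * δ ∧ y = u * δ := by
  obtain ⟨δ, hδ⟩ := huv.symm.dvd_of_dvd_mul_left ⟨y, h⟩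
  refine ⟨δ, hδ, mul_left_cancel₀ hv ?_⟩
  rw [← h, hδ]
  ring

lemma Int.eq_and_eq_of_mul_eq_mul {x y u v : ℤ} (hxy : IsCoprime x y) (huv : IsCoprime u v)
    (h : x * u = y * v) (hu : 0 < u) (hy : 0 < y) : u = y ∧ v = x := by
  obtain ⟨δ, rfl, rfl⟩ := hxy.exists_eq_mul_of_mul_eq_mul hy.ne' h
  have hδ : δ = 1 ∨ δ = -1 :=
    Int.isUnit_iff.mp (huv.isUnit_of_dvd' (dvd_mul_left δ y) (dvd_mul_left δ x))
  rcases hδ with rfl | rfl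
  · simp
  · linarith

lemma Int.exists_pythagorean_parametrization {x y z : ℤ} (h : x ^ 2 + y ^ 2 = z ^ 2)
    (hxy : IsCoprime x y) (hx : Odd x) :
    ∃ m n, x = m ^ 2 - n ^ 2 ∧ y = 2 * m * n ∧ |z| = m ^ 2 + n ^ 2 ∧ IsCoprime m n := by
  have hz : 0 < |z| := by
    rw [abs_pos]
    rintro rfl
    have hx0 : x = 0 := by nlinarith
    simp [hx0] at hx
  obtain ⟨m, n, hx, hy, hz, hmn, -, -⟩ := PythagoreanTriple.coprime_classification'
    (x := x) (y := y) (z := |z|) (by rw [PythagoreanTriple, abs_mul_abs_self]; linear_combination h)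
    (Int.isCoprime_iff_gcd_eq_one.mp hxy) (Int.odd_iff.mp hx) hz
  exact ⟨m, n, hx, hy, hz, Int.isCoprime_iff_gcd_eq_one.mpr hmn⟩

lemma Int.quartic_ne_sq_of_odd {a b e : ℤ} (ha : Odd a) (hb : Odd b) :
    a ^ 4 + 3 * a ^ 2 * b ^ 2 + b ^ 4 ≠ e ^ 2 := by
  intro h
  have h8 := congrArg (Int.cast : ℤ → ZMod 8) h
  push_cast at h8
  have ha8 := Int.sq_cast_zmod_eight_of_odd ha
  have hb8 := Int.sq_cast_zmod_eight_of_odd hb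
  have he8 : (e : ZMod 8) ^ 2 = 5 := by
    linear_combination -h8 + ((a : ZMod 8) ^ 2 + 1 + 3 * (b : ZMod 8) ^ 2) * ha8 +
      ((b : ZMod 8) ^ 2 + 4) * hb8
  generalize (e : ZMod 8) = t at he8
  revert t
  decide

lemma Int.false_of_sq_sub_four_mul_sq_eq_five_mul_sq {p q l k : ℤ} (hp : Odd p) (hq : Odd q)
    (hC : p ^ 2 - 4 * l ^ 2 = q ^ 2 * 5) (hD : p ^ 2 + l ^ 2 = k ^ 2 * 5) : False := by
  have hp8 := Int.sq_cast_zmod_eight_of_odd hp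
  have hq8 := Int.sq_cast_zmod_eight_of_odd hq
  have hC8 := congrArg (Int.cast : ℤ → ZMod 8) hC
  have hD8 := congrArg (Int.cast : ℤ → ZMod 8) hD
  push_cast at hC8 hD8
  rw [hp8, hq8] at hC8
  rw [hp8] at hD8
  generalize (l : ZMod 8) = s at hC8 hD8
  generalize (k : ZMod 8) = t at hD8
  revert s t
  decide

lemma exists_eq_mul_and_eq_mul_of_mul_eq_mul {α : Type*} [CommMonoidWithZero α] [IsCancelMulZero α]
    [DecompositionMonoid α] {a b m n : α} (ha : a ≠ 0) (h : a * b = m * n) :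
    ∃ k l p q, a = k * l ∧ b = p * q ∧ m = k * p ∧ n = l * q := by
  obtain ⟨k, l, ⟨p, rfl⟩, ⟨q, rfl⟩, rfl⟩ := exists_dvd_and_dvd_of_dvd_mul ⟨b, h.symm⟩
  refine ⟨k, l, p, q, rfl, mul_left_cancel₀ ha ?_, rfl, rfl⟩
  rw [h]
  exact mul_mul_mul_comm k p l q

lemma Int.exists_quartic_eq_sq_of_factorization {k l p q : ℤ} (hl : l ≠ 0)
    (hp : Odd p) (hq : Odd q) (hkq : IsCoprime k q) (hlp : IsCoprime l p) (hlq : IsCoprime l q)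
    (heq : (2 * k * l) ^ 2 + (p * q) ^ 2 = (k * p) ^ 2 - (l * q) ^ 2) :
    ∃ g h : ℤ, g ≠ 0 ∧ h ≠ 0 ∧ IsCoprime g h ∧ g ^ 4 + 3 * g ^ 2 * h ^ 2 + h ^ 4 = k ^ 2 := by
  have hq₀ : q ≠ 0 := by rintro rfl; simp at hq
  obtain ⟨δ, hC, hD⟩ := hkq.pow.exists_eq_mul_of_mul_eq_mul (pow_ne_zero 2 hq₀)
    (show k ^ 2 * (p ^ 2 - 4 * l ^ 2) = q ^ 2 * (p ^ 2 + l ^ 2) by linear_combination -heq)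
  -- `δ` divides `5 l² = (p² + l²) - (p² - 4 l²)` and `5 p² = 4 (p² + l²) + (p² - 4 l²)`.
  have hδ5 : δ ∣ 5 := by
    obtain ⟨u, v, huv⟩ := hlp.pow (m := 2) (n := 2)
    exact ⟨u * (k ^ 2 - q ^ 2) + v * (4 * k ^ 2 + q ^ 2), by
      linear_combination -5 * huv + (u + 4 * v) * hD + (v - u) * hC⟩
  have hδ : 0 < δ := by
    refine pos_of_mul_pos_right (a := k ^ 2) ?_ (sq_nonneg k)
    rw [← hD]
    positivity
  obtain rfl | rfl : δ = 1 ∨ δ = 5 := by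
    have := Int.le_of_dvd (by norm_num) hδ5
    interval_cases δ <;> simp_all
  · obtain ⟨g, h, -, hlgh, hpgh, hgh⟩ := Int.exists_pythagorean_parametrization
      (x := q) (y := 2 * l) (z := p) (by linear_combination -hC)
      ((Int.isCoprime_two_right.mpr hq).mul_right hlq.symm) hq
    replace hlgh : l = g * h := by linarith
    refine ⟨g, h, left_ne_zero_of_mul (hlgh ▸ hl), right_ne_zero_of_mul (hlgh ▸ hl), hgh, ?_⟩
    rw [← sq_abs p] at hD
    linear_combination hD - (g ^ 2 + h ^ 2 + |p|) * hpgh - (l + g * h) * hlgh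
  · exact (Int.false_of_sq_sub_four_mul_sq_eq_five_mul_sq hp hq hC hD).elim

lemma Int.exists_quartic_eq_sq_natAbs_lt_of_even {a b e : ℤ} (ha : a ≠ 0) (hb : b ≠ 0)
    (hab : IsCoprime a b) (ha2 : Even a) (he : a ^ 4 + 3 * a ^ 2 * b ^ 2 + b ^ 4 = e ^ 2) :
    ∃ g h k : ℤ, g ≠ 0 ∧ h ≠ 0 ∧ IsCoprime g h ∧ g ^ 4 + 3 * g ^ 2 * h ^ 2 + h ^ 4 = k ^ 2 ∧
      k.natAbs < e.natAbs := by
  have hb2 : Odd b := Int.not_even_iff_odd.mp fun hb2 => by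
    simpa [Int.isUnit_iff] using hab.isUnit_of_dvd' ha2.two_dvd hb2.two_dvd
  obtain ⟨m, n, hmn₁, hmn₂, hmn₃, hmn⟩ := Int.exists_pythagorean_parametrization
    (x := a ^ 2 + b ^ 2) (y := a * b) (z := e) (by linear_combination he)
    hab.mul_sq_add_sq.symm ((ha2.pow_of_ne_zero two_ne_zero).add_odd hb2.pow)
  obtain ⟨a₀, rfl⟩ := ha2
  obtain ⟨k, l, p, q, rfl, rfl, rfl, rfl⟩ :=
    exists_eq_mul_and_eq_mul_of_mul_eq_mul (a := a₀) (b := b) (m := m) (n := n)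
      (by rintro rfl; simp at ha) (by linarith)
  obtain ⟨hp, hq⟩ := Int.odd_mul.mp hb2
  have hl₀ : l ≠ 0 := by rintro rfl; simp at ha
  have hlq₀ : l * q ≠ 0 := right_ne_zero_of_mul hb |> mul_ne_zero hl₀
  have hk : k ∣ k * l + k * l := ⟨2 * l, by ring⟩
  have hl : l ∣ k * l + k * l := ⟨2 * k, by ring⟩
  obtain ⟨g, h, hg, hh, hgh, hghk⟩ := Int.exists_quartic_eq_sq_of_factorization
    hl₀ hp hq (hab.mono hk (dvd_mul_left q p))
    (hab.mono hl (dvd_mul_right p q)) (hab.mono hl (dvd_mul_left q p))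
    (by linear_combination hmn₁)
  refine ⟨g, h, k, hg, hh, hgh, hghk, ?_⟩
  have hp₀ : p ≠ 0 := by rintro rfl; simp at hp
  have hp₁ : 1 ≤ p ^ 2 := pow_two_pos_of_ne_zero hp₀
  suffices (k.natAbs : ℤ) < e.natAbs by exact_mod_cast this
  calc (k.natAbs : ℤ) ≤ k ^ 2 := Int.natAbs_le_self_sq k
    _ ≤ (k * p) ^ 2 := by rw [mul_pow]; exact le_mul_of_one_le_right (sq_nonneg k) hp₁
    _ < (k * p) ^ 2 + (l * q) ^ 2 := lt_add_of_pos_right _ (pow_two_pos_of_ne_zero hlq₀)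
    _ = e.natAbs := by rw [Int.natCast_natAbs, hmn₃]

theorem Int.quartic_ne_sq {a b e : ℤ} (ha : a ≠ 0) (hb : b ≠ 0) (hab : IsCoprime a b) :
    a ^ 4 + 3 * a ^ 2 * b ^ 2 + b ^ 4 ≠ e ^ 2 := by
  intro he
  rcases Int.even_or_odd a with ha2 | ha2
  · obtain ⟨g, h, k, hg, hh, hgh, hk, hlt⟩ :=
      Int.exists_quartic_eq_sq_natAbs_lt_of_even ha hb hab ha2 he
    exact Int.quartic_ne_sq hg hh hgh hk
  rcases Int.even_or_odd b with hb2 | hb2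
  · obtain ⟨g, h, k, hg, hh, hgh, hk, hlt⟩ :=
      Int.exists_quartic_eq_sq_natAbs_lt_of_even hb ha hab.symm hb2 (e := e)
        (by linear_combination he)
    exact Int.quartic_ne_sq hg hh hgh hk
  · exact Int.quartic_ne_sq_of_odd ha2 hb2 he
termination_by e.natAbs
decreasing_by all_goals assumption

theorem stmt_9 :
    ¬ ∃ a b c d : ℤ, 0 < a ∧ 0 < b ∧ 0 < c ∧ 0 < d ∧
      Even a ∧ Odd b ∧ Odd c ∧ Odd d ∧
      Int.gcd a b = 1 ∧ Int.gcd c d = 1 ∧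
      2 * a * b * c * d = (a ^ 2 + b ^ 2) * (c ^ 2 - d ^ 2) := by
  rintro ⟨a, b, c, d, ha, hb, hc, hd, ha2, hb2, hc2, hd2, hab, hcd, h⟩
  rw [← Int.isCoprime_iff_gcd_eq_one] at hab hcd
  have hab' : IsCoprime (2 * (a * b)) (a ^ 2 + b ^ 2) :=
    (Int.isCoprime_two_left.mpr ((ha2.pow_of_ne_zero two_ne_zero).add_odd hb2.pow)).mul_left
      hab.mul_sq_add_sq
  obtain ⟨hcd_eq, hsub⟩ := Int.eq_and_eq_of_mul_eq_mul hab' hcd.mul_sq_sub_sq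
    (by linear_combination h) (by positivity) (by positivity)
  obtain ⟨f, hf⟩ := (hc2.pow (n := 2)).add_odd (hd2.pow (n := 2))
  have hf4 : 4 * (a ^ 4 + 3 * a ^ 2 * b ^ 2 + b ^ 4) = 4 * f ^ 2 := by
    linear_combination -(c ^ 2 - d ^ 2 + 2 * (a * b)) * hsub
      - 4 * (c * d + a ^ 2 + b ^ 2) * hcd_eq + (c ^ 2 + d ^ 2 + f + f) * hf
  exact Int.quartic_ne_sq ha.ne' hb.ne' hab (mul_left_cancel₀ four_ne_zero hf4)
end

section
/- There do not exist positive integers a, b, c, d with a even, gcd(a,b)=1, gcd(c,d)=1, such that b²(c² − d²) = a²(4c² + d²) with c > d. -/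
/-!
Put `f(x, y) = (x² - y²)(4x² + y²)`. Multiplying the equation by `4c² + d²` shows that
`f(c, d) b²` is a square, so `f(c, d)` is a square with `0 < d < c`; we show by descent on `x`
that `f(x, y)` is never a square for `0 < y < x`.

As `f` is homogeneous we may assume `x, y` coprime. The factors `x² - y²` and `4x² + y²` then
have gcd dividing `5`, so they are both squares or both five times squares. Parity modulo 8
leaves three cases. If `y` is even and the factors are `5s²` and `5(2ρ)²`, then `(ρ, s)` is a
smaller solution. In the other two cases the factor equations are two primitive Pythagorean
triples; Euclid's formula for them yields `A, B, C, D` with `A² + B² + D² = C²` and `AB = 2CD`,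
and then `f(C, A)` is a square with `C < x`.
-/

theorem Nat.parity_sq_mod (n : ℕ) : n % 2 = 1 ∧ n ^ 2 % 8 = 1 ∨ n % 2 = 0 ∧ n ^ 2 % 4 = 0 := by
  have hn : n ^ 2 % 8 = (n % 8) ^ 2 % 8 := Nat.pow_mod n 2 8
  have : n % 8 < 8 := Nat.mod_lt n (by norm_num)
  interval_cases h : n % 8 <;> omega

theorem Nat.Coprime.mod_two_eq_one_or {x y : ℕ} (h : Nat.Coprime x y) :
    x % 2 = 1 ∨ y % 2 = 1 := by
  by_contra! hxy
  have h2 : 2 ∣ Nat.gcd x y := Nat.dvd_gcd (by omega) (by omega)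
  rw [h] at h2
  omega

theorem Nat.coprime_iff_of_sq_eq_add_mul_sq {a b c k : ℕ} (h : c ^ 2 = a + k * b ^ 2) :
    Nat.Coprime c b ↔ Nat.Coprime a b := by
  rw [← Nat.coprime_pow_left_iff two_pos c b, ← Nat.coprime_pow_right_iff two_pos, h,
    Nat.coprime_add_mul_right_left, Nat.coprime_pow_right_iff two_pos]

theorem Nat.isSquare_of_isSquare_mul_sq {n b : ℕ} (hb : b ≠ 0) (h : IsSquare (n * b ^ 2)) :
    IsSquare n := by
  rw [← Rat.isSquare_natCast_iff] at h ⊢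
  have hb' : (b : ℚ) ^ 2 ≠ 0 := by positivity
  simpa [hb'] using h.div (IsSquare.sq (b : ℚ))

theorem Nat.Coprime.isSquare_of_isSquare_mul {A B : ℕ} (h : Nat.Coprime A B)
    (hAB : IsSquare (A * B)) : IsSquare A ∧ IsSquare B := by
  obtain ⟨q, hq⟩ := hAB
  rw [← sq] at hq
  obtain ⟨s, rfl⟩ := exists_eq_pow_of_mul_eq_pow (Nat.isUnit_iff.mpr h) hq
  obtain ⟨r, rfl⟩ :=
    exists_eq_pow_of_mul_eq_pow (Nat.isUnit_iff.mpr h.symm) ((mul_comm _ _).trans hq)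
  exact ⟨IsSquare.sq s, IsSquare.sq r⟩

theorem Nat.sq_or_prime_mul_sq_of_gcd_dvd {p A B : ℕ} (hp : p.Prime) (hAB : Nat.gcd A B ∣ p)
    (h : IsSquare (A * B)) :
    (∃ s r, A = s ^ 2 ∧ B = r ^ 2) ∨ ∃ s r, A = p * s ^ 2 ∧ B = p * r ^ 2 := by
  rcases hp.eq_one_or_self_of_dvd _ hAB with hcop | hgcd
  · obtain ⟨⟨s, rfl⟩, ⟨r, rfl⟩⟩ := Nat.Coprime.isSquare_of_isSquare_mul hcop h
    exact .inl ⟨s, r, (sq s).symm, (sq r).symm⟩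
  · obtain ⟨A', rfl⟩ : p ∣ A := hgcd ▸ Nat.gcd_dvd_left A B
    obtain ⟨B', rfl⟩ : p ∣ B := hgcd ▸ Nat.gcd_dvd_right _ B
    have hcop : Nat.Coprime A' B' := by
      rw [Nat.gcd_mul_left] at hgcd
      exact Nat.eq_of_mul_eq_mul_left hp.pos (hgcd.trans (mul_one p).symm)
    have hsq : IsSquare (A' * B' * p ^ 2) := by convert h using 1; ring
    obtain ⟨⟨s, rfl⟩, ⟨r, rfl⟩⟩ :=
      hcop.isSquare_of_isSquare_mul (Nat.isSquare_of_isSquare_mul_sq hp.ne_zero hsq)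
    exact .inr ⟨s, r, by ring, by ring⟩

theorem Nat.pythagorean_classification_of_odd {a b c : ℕ} (h : a ^ 2 + b ^ 2 = c ^ 2)
    (ha : a % 2 = 1) (hab : Nat.Coprime a b) :
    ∃ p q, a + q ^ 2 = p ^ 2 ∧ b = 2 * (p * q) ∧ c = p ^ 2 + q ^ 2 := by
  have hc : 0 < c := by
    rcases Nat.eq_zero_or_pos c with rfl | hc
    · simp at h; omega
    · exact hc
  have hZ : (a : ℤ) ^ 2 + b ^ 2 = c ^ 2 := by exact_mod_cast h
  obtain ⟨m, n, ha', hb', hc', -⟩ := PythagoreanTriple.coprime_classification'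
    (x := a) (y := b) (z := c) (by unfold PythagoreanTriple; linear_combination hZ)
    (by simpa [Int.gcd_natCast_natCast] using hab) (by omega) (by exact_mod_cast hc)
  refine ⟨m.natAbs, n.natAbs, ?_, ?_, ?_⟩ <;> zify
  · rw [sq_abs, sq_abs]; linarith
  · rw [← abs_of_nonneg (Int.natCast_nonneg b), hb', abs_mul, abs_mul, abs_two, mul_assoc]
  · rw [sq_abs, sq_abs, hc']

theorem gcd_quartic_factors_dvd_five {x y A : ℕ} (hxy : Nat.Coprime x y)
    (hA : A + y ^ 2 = x ^ 2) : Nat.gcd A (4 * x ^ 2 + y ^ 2) ∣ 5 := by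
  set g := Nat.gcd A (4 * x ^ 2 + y ^ 2)
  have hgA : g ∣ A := Nat.gcd_dvd_left _ _
  have hgB : g ∣ 4 * x ^ 2 + y ^ 2 := Nat.gcd_dvd_right _ _
  have hx : g ∣ 5 * x ^ 2 := by
    rw [show 5 * x ^ 2 = A + (4 * x ^ 2 + y ^ 2) by omega]
    exact dvd_add hgA hgB
  have hy : g ∣ 5 * y ^ 2 := by
    rw [show 4 * x ^ 2 + y ^ 2 = 4 * A + 5 * y ^ 2 by omega] at hgB
    exact (Nat.dvd_add_right (hgA.mul_left 4)).mp hgB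
  simpa [Nat.gcd_mul_left, (hxy.pow 2 2).gcd_eq_one] using Nat.dvd_gcd hx hy

def IsSquareQuartic (x y : ℕ) : Prop :=
  0 < y ∧ y < x ∧ IsSquare ((x ^ 2 - y ^ 2) * (4 * x ^ 2 + y ^ 2))

theorem IsSquareQuartic.of_mul_right {g x y : ℕ} (h : IsSquareQuartic (x * g) (y * g)) :
    IsSquareQuartic x y := by
  obtain ⟨hy, hyx, hsq⟩ := h
  have hg : g ≠ 0 := by rintro rfl; simp at hy
  refine ⟨Nat.pos_of_mul_pos_right hy, Nat.lt_of_mul_lt_mul_right hyx,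
    Nat.isSquare_of_isSquare_mul_sq (b := g ^ 2) (by positivity) ?_⟩
  convert hsq using 1
  rw [mul_pow, mul_pow, ← Nat.sub_mul]
  ring

-- `(2C)² (C² - A²) = (2C)² (B² + D²) = B² (4C² + A²)`, using `2CD = AB`.
theorem isSquareQuartic_of_sq_add_sq_add_sq {A B C D : ℕ} (hA : 0 < A) (hB : 0 < B)
    (h₁ : A ^ 2 + B ^ 2 + D ^ 2 = C ^ 2) (h₂ : A * B = 2 * (C * D)) : IsSquareQuartic C A := by
  have hAC : A < C := (Nat.pow_lt_pow_iff_left two_ne_zero).mp (by nlinarith)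
  refine ⟨hA, hAC, Nat.isSquare_of_isSquare_mul_sq (b := 2 * C) (by omega)
    ⟨B * (4 * C ^ 2 + A ^ 2), ?_⟩⟩
  rw [show C ^ 2 - A ^ 2 = B ^ 2 + D ^ 2 by omega]
  linear_combination (4 * C ^ 2 + A ^ 2) * (2 * (C * D) + A * B) * h₂.symm

theorem isSquareQuartic_of_sq_add_sq_of_four_mul_sq_add_sq {δ s ρ x : ℕ} (hδ : 0 < δ)
    (hs : 0 < s) (hρ : δ ^ 2 + s ^ 2 = ρ ^ 2) (hx : 4 * ρ ^ 2 + s ^ 2 = x ^ 2) :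
    IsSquareQuartic ρ s := by
  refine ⟨hs, (Nat.pow_lt_pow_iff_left two_ne_zero).mp (by nlinarith), δ * x, ?_⟩
  rw [show ρ ^ 2 - s ^ 2 = δ ^ 2 by omega, hx]
  ring

theorem exists_isSquareQuartic_lt_of_sq_factors {x y s r : ℕ} (hxy : Nat.Coprime x y)
    (hy : 0 < y) (hs : s ^ 2 + y ^ 2 = x ^ 2) (hr : 4 * x ^ 2 + y ^ 2 = r ^ 2) :
    ∃ x' y', IsSquareQuartic x' y' ∧ x' < x := by
  -- modulo 8 this forces `y` and `r` even, `x` and `s` odd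
  have := hxy.mod_two_eq_one_or
  have := x.parity_sq_mod; have := y.parity_sq_mod
  have := s.parity_sq_mod; have := r.parity_sq_mod
  obtain ⟨l, rfl⟩ : ∃ l, y = 2 * l := ⟨y / 2, by omega⟩
  obtain ⟨t, rfl⟩ : ∃ t, r = 2 * t := ⟨r / 2, by omega⟩
  have ht : x ^ 2 + l ^ 2 = t ^ 2 := by nlinarith
  have hsl : Nat.Coprime s (2 * l) :=
    (Nat.coprime_pow_left_iff two_pos s _).mp
      ((Nat.coprime_iff_of_sq_eq_add_mul_sq (k := 1) (by omega)).mp hxy)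
  obtain ⟨p, q, hsp, hlpq, hxpq⟩ := Nat.pythagorean_classification_of_odd hs (by omega) hsl
  obtain ⟨α, β, hxα, hlαβ, htαβ⟩ :=
    Nat.pythagorean_classification_of_odd ht (by omega) hxy.coprime_mul_left_right
  have hpq : p * q = 2 * (α * β) := by linarith
  obtain ⟨hp, hq⟩ := CanonicallyOrderedAdd.mul_pos.mp (show 0 < p * q by omega)
  obtain ⟨hα, hβ⟩ := CanonicallyOrderedAdd.mul_pos.mp (show 0 < α * β by omega)
  refine ⟨α, p, isSquareQuartic_of_sq_add_sq_add_sq (D := β) hp hq (by omega) hpq, ?_⟩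
  nlinarith [two_mul_le_add_sq p q]

theorem exists_isSquareQuartic_lt_of_five_mul_sq_factors {x y s r : ℕ}
    (hxy : Nat.Coprime x y) (hy : 0 < y) (hyx : y < x)
    (hs : 5 * s ^ 2 + y ^ 2 = x ^ 2) (hr : 4 * x ^ 2 + y ^ 2 = 5 * r ^ 2) :
    ∃ x' y', IsSquareQuartic x' y' ∧ x' < x := by
  have hxrs : r ^ 2 + s ^ 2 = x ^ 2 := by omega
  have hrys : y ^ 2 + 4 * s ^ 2 = r ^ 2 := by omega
  have hs0 : 0 < s := by
    have := Nat.pow_lt_pow_left hyx two_ne_zero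
    exact Nat.pos_of_ne_zero (by rintro rfl; omega)
  have := y.parity_sq_mod; have := r.parity_sq_mod
  rcases Nat.mod_two_eq_zero_or_one y with hy2 | hy2
  · obtain ⟨δ, rfl⟩ : ∃ δ, y = 2 * δ := ⟨y / 2, by omega⟩
    obtain ⟨ρ, rfl⟩ : ∃ ρ, r = 2 * ρ := ⟨r / 2, by omega⟩
    refine ⟨ρ, s, isSquareQuartic_of_sq_add_sq_of_four_mul_sq_add_sq (δ := δ) (x := x)
      (by omega) hs0 (by nlinarith) (by nlinarith), (Nat.pow_lt_pow_iff_left two_ne_zero).mp ?_⟩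
    nlinarith
  · have hys : Nat.Coprime y s := by
      have h5 : Nat.Coprime (5 * s ^ 2) y :=
        (Nat.coprime_iff_of_sq_eq_add_mul_sq (k := 1) (by omega)).mp hxy
      exact ((Nat.coprime_pow_left_iff two_pos s y).mp h5.coprime_mul_left).symm
    have hrs : Nat.Coprime r s :=
      (Nat.coprime_iff_of_sq_eq_add_mul_sq (k := 4) (by omega)).mpr (hys.pow_left 2)
    have hy2s : Nat.Coprime y (2 * s) :=
      (Nat.coprime_two_right.mpr (Nat.odd_iff.mpr hy2)).mul_right hys
    obtain ⟨α, β, hyα, hsαβ, hrαβ⟩ := Nat.pythagorean_classification_of_odd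
      (show y ^ 2 + (2 * s) ^ 2 = r ^ 2 by linear_combination hrys) hy2 hy2s
    obtain ⟨p, q, hrp, hspq, hxpq⟩ := Nat.pythagorean_classification_of_odd hxrs (by omega) hrs
    obtain ⟨hα, hβ⟩ := CanonicallyOrderedAdd.mul_pos.mp (show 0 < α * β by omega)
    have hq : 0 < q := (CanonicallyOrderedAdd.mul_pos.mp (show 0 < p * q by omega)).2
    refine ⟨p, α, isSquareQuartic_of_sq_add_sq_add_sq (D := q) hα hβ (by omega) (by omega), ?_⟩
    have := Nat.le_self_pow two_ne_zero p
    have := pow_pos hq 2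
    omega

theorem IsSquareQuartic.exists_lt_of_coprime {x y : ℕ} (h : IsSquareQuartic x y)
    (hxy : Nat.Coprime x y) : ∃ x' y', IsSquareQuartic x' y' ∧ x' < x := by
  obtain ⟨hy, hyx, hsq⟩ := h
  have hA : x ^ 2 - y ^ 2 + y ^ 2 = x ^ 2 := Nat.sub_add_cancel (Nat.pow_le_pow_left hyx.le 2)
  rcases Nat.sq_or_prime_mul_sq_of_gcd_dvd Nat.prime_five
    (gcd_quartic_factors_dvd_five hxy hA) hsq with ⟨s, r, hs, hr⟩ | ⟨s, r, hs, hr⟩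
  · exact exists_isSquareQuartic_lt_of_sq_factors hxy hy (hs ▸ hA) hr
  · exact exists_isSquareQuartic_lt_of_five_mul_sq_factors hxy hy hyx (hs ▸ hA) hr

theorem IsSquareQuartic.exists_lt {x y : ℕ} (h : IsSquareQuartic x y) :
    ∃ x' y', IsSquareQuartic x' y' ∧ x' < x := by
  have hx : 0 < x := h.1.trans h.2.1
  obtain ⟨g, x₀, y₀, hg, hco, rfl, rfl⟩ := Nat.exists_coprime' (Nat.gcd_pos_of_pos_left y hx)
  obtain ⟨x', y', h', hlt⟩ := h.of_mul_right.exists_lt_of_coprime hco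
  exact ⟨x', y', h', hlt.trans_le (Nat.le_mul_of_pos_right x₀ hg)⟩

theorem not_isSquareQuartic (x y : ℕ) : ¬ IsSquareQuartic x y := by
  induction x using Nat.strong_induction_on generalizing y with
  | _ x ih =>
    intro h
    obtain ⟨x', y', h', hlt⟩ := h.exists_lt
    exact ih x' hlt y' h'

theorem stmt_11 :
    ¬ ∃ a b c d : ℕ, 0 < a ∧ 0 < b ∧ 0 < c ∧ 0 < d ∧
      Even a ∧ Nat.gcd a b = 1 ∧ Nat.gcd c d = 1 ∧ d < c ∧
      b ^ 2 * (c ^ 2 - d ^ 2) = a ^ 2 * (4 * c ^ 2 + d ^ 2) := by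
  rintro ⟨a, b, c, d, -, hb, -, hd, -, -, -, hdc, heq⟩
  refine not_isSquareQuartic c d ⟨hd, hdc, Nat.isSquare_of_isSquare_mul_sq hb.ne'
    ⟨a * (4 * c ^ 2 + d ^ 2), ?_⟩⟩
  calc (c ^ 2 - d ^ 2) * (4 * c ^ 2 + d ^ 2) * b ^ 2
      = b ^ 2 * (c ^ 2 - d ^ 2) * (4 * c ^ 2 + d ^ 2) := by ring
    _ = _ := by rw [heq]; ring
end

section
/- There do not exist positive integers a, b, c, d with a even, gcd(a,b)=1, gcd(c,d)=1, c > d, such that b²(c² − d²) = a²(c² + d²). -/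
-- squares mod 16
lemma aux16 : ∀ p q r : ZMod 16, (p + p) ^ 4 ≠ (2 * q + 1) ^ 4 + r ^ 2 := by decide

lemma aux4 : ∀ u v w : ZMod 4, (2 * u + 1) ^ 2 + (2 * v + 1) ^ 2 ≠ w ^ 2 := by decide

lemma mod16_kill {b a z : ℤ} (hb : Even b) (ha : Odd a) : b ^ 4 ≠ a ^ 4 + z ^ 2 := by
  intro h
  obtain ⟨k, hk⟩ := hb
  obtain ⟨j, hj⟩ := ha
  have h16 : ((b : ZMod 16)) ^ 4 = (a : ZMod 16) ^ 4 + (z : ZMod 16) ^ 2 := by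
    exact_mod_cast congrArg (fun t : ℤ => (t : ZMod 16)) h
  rw [hk, hj] at h16
  push_cast at h16
  exact aux16 (k : ZMod 16) (j : ZMod 16) (z : ZMod 16) h16

lemma pos_sq_of_coprime {m n p : ℤ} (hco : IsCoprime m n) (h : m * n = p ^ 2) (hm : 0 < m) :
    ∃ e : ℤ, 0 < e ∧ m = e ^ 2 := by
  obtain ⟨a0, h0 | h0⟩ := Int.sq_of_isCoprime hco h
  · have ha0 : a0 ≠ 0 := by rintro rfl; simp at h0; omega
    exact ⟨|a0|, abs_pos.mpr ha0, by rw [h0, sq_abs]⟩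
  · nlinarith [sq_nonneg a0]

lemma not_both_even {b a : ℤ} (hco : IsCoprime b a) (hb : Even b) (ha : Even a) : False := by
  have := hco.isUnit_of_dvd' hb.two_dvd ha.two_dvd
  rw [Int.isUnit_iff] at this
  omega

lemma descent : ∀ N : ℕ, ∀ b a z : ℤ, b.natAbs ≤ N → 0 < b → 0 < a → 0 < z →
    IsCoprime b a → Even a → b ^ 4 = a ^ 4 + z ^ 2 → False := by
  intro N
  induction N with
  | zero =>
    intro b a z hN hb _ _ _ _ _
    have : b.natAbs = 0 := by omega
    rw [Int.natAbs_eq_zero] at this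
    omega
  | succ N ih =>
    intro b a z hN hb ha hz hco hae heq
    -- b is odd
    have hbo : Odd b := by
      rw [← Int.not_even_iff_odd]
      intro hbe
      exact not_both_even hco hbe hae
    -- z is odd
    have hzo : Odd z := by
      rw [← Int.not_even_iff_odd]
      intro hze
      have h1 : Even (a ^ 4 + z ^ 2) :=
        Even.add (Int.even_pow.mpr ⟨hae, by norm_num⟩) (Int.even_pow.mpr ⟨hze, by norm_num⟩)
      rw [← heq, Int.even_pow] at h1
      exact (Int.not_even_iff_odd.mpr hbo) h1.1
    -- z coprime to a
    have hcza : IsCoprime z a := by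
      have h1 : IsCoprime (b ^ 4) (a ^ 4) := (hco.pow : IsCoprime (b ^ 4) (a ^ 4))
      rw [heq] at h1
      have h2 : IsCoprime (z ^ 2) (a ^ 4) := by
        have h3 := h1.add_mul_right_left (-1)
        have he : a ^ 4 + z ^ 2 + -1 * a ^ 4 = z ^ 2 := by ring
        rwa [he] at h3
      exact ((IsCoprime.pow_left_iff (by norm_num)).mp
        ((IsCoprime.pow_right_iff (by norm_num)).mp h2))
    -- Pythagorean triple z, a^2, b^2
    have hpt : PythagoreanTriple z (a ^ 2) (b ^ 2) := by
      unfold PythagoreanTriple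
      linear_combination (-1 : ℤ) * heq
    obtain ⟨m, n, hz1, ha2, hb2, hmn, hpar, hm0⟩ :=
      hpt.coprime_classification'
        (by rw [← Int.isCoprime_iff_gcd_eq_one]; exact hcza.pow_right)
        (Int.odd_iff.mp hzo) (by positivity)
    have hcmn : IsCoprime m n := Int.isCoprime_iff_gcd_eq_one.mpr hmn
    -- m, n positive
    have hmn_pos : 0 < m * n := by nlinarith
    have hm_pos : 0 < m := by
      rcases lt_or_eq_of_le hm0 with h | h
      · exact h
      · rw [← h] at hmn_pos; simp at hmn_pos
    have hn_pos : 0 < n := by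
      by_contra hn
      push_neg at hn
      have h0 : m * n ≤ 0 := mul_nonpos_iff.mpr (Or.inl ⟨le_of_lt hm_pos, hn⟩)
      linarith
    -- get p q with b^2 = (q^2)^2 + (2 p^2)^2, q odd, coprime
    obtain ⟨p, q, hp, hq, hqo, hcqp, hbpq⟩ :
        ∃ p q : ℤ, 0 < p ∧ 0 < q ∧ Odd q ∧ IsCoprime (q ^ 2) (2 * p ^ 2) ∧
          b ^ 2 = (q ^ 2) ^ 2 + (2 * p ^ 2) ^ 2 := by
      obtain ⟨a1, ha1⟩ := hae
      have ha1' : m * n = 2 * a1 ^ 2 := by nlinarith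
      rcases hpar with ⟨hme, hno⟩ | ⟨hmo, hne⟩
      · -- m even: m = 2 m1, m1 * n = a1^2
        obtain ⟨m1, hm1⟩ : ∃ m1, m = 2 * m1 := ⟨m / 2, by omega⟩
        have hm1n : n * m1 = a1 ^ 2 := by nlinarith
        have hcm1n : IsCoprime n m1 := by
          have : IsCoprime (2 * m1) n := by rwa [hm1] at hcmn
          exact (IsCoprime.of_mul_left_right this).symm
        have hm1_pos : 0 < m1 := by omega
        obtain ⟨q, hq0, hqsq⟩ := pos_sq_of_coprime hcm1n hm1n hn_pos
        obtain ⟨p, hp0, hpsq⟩ := pos_sq_of_coprime hcm1n.symm (by linarith [hm1n] : m1 * n = a1 ^ 2) hm1_pos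
        refine ⟨p, q, hp0, hq0, ?_, ?_, ?_⟩
        · rw [← Int.not_even_iff_odd]
          intro hqe
          have : Even n := by rw [hqsq]; exact Int.even_pow.mpr ⟨hqe, by norm_num⟩
          rw [Int.even_iff] at this; omega
        · rw [← hqsq]
          have h2p : 2 * p ^ 2 = m := by rw [hm1, hpsq]
          rw [h2p]
          exact hcmn.symm
        · rw [← hqsq]
          have h2p : 2 * p ^ 2 = m := by rw [hm1, hpsq]
          rw [h2p]; linarith [hb2]
      · -- n even: n = 2 n1, m * n1 = a1^2
        obtain ⟨n1, hn1⟩ : ∃ n1, n = 2 * n1 := ⟨n / 2, by omega⟩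
        have hm1n : m * n1 = a1 ^ 2 := by nlinarith
        have hcm1n : IsCoprime m n1 := by
          have : IsCoprime m (2 * n1) := by rwa [hn1] at hcmn
          exact IsCoprime.of_mul_right_right this
        have hn1_pos : 0 < n1 := by omega
        obtain ⟨q, hq0, hqsq⟩ := pos_sq_of_coprime hcm1n hm1n hm_pos
        obtain ⟨p, hp0, hpsq⟩ := pos_sq_of_coprime hcm1n.symm (by linarith [hm1n] : n1 * m = a1 ^ 2) hn1_pos
        refine ⟨p, q, hp0, hq0, ?_, ?_, ?_⟩
        · rw [← Int.not_even_iff_odd]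
          intro hqe
          have : Even m := by rw [hqsq]; exact Int.even_pow.mpr ⟨hqe, by norm_num⟩
          rw [Int.even_iff] at this; omega
        · rw [← hqsq]
          have h2p : 2 * p ^ 2 = n := by rw [hn1, hpsq]
          rw [h2p]
          exact hcmn
        · rw [← hqsq]
          have h2p : 2 * p ^ 2 = n := by rw [hn1, hpsq]
          rw [h2p]; linarith [hb2]
    -- second Pythagorean triple
    have hpt2 : PythagoreanTriple (q ^ 2) (2 * p ^ 2) b := by
      unfold PythagoreanTriple
      linear_combination (-1 : ℤ) * hbpq
    obtain ⟨m', n', hq1, hp2, hb', hmn', hpar', hm0'⟩ :=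
      hpt2.coprime_classification'
        (by rw [← Int.isCoprime_iff_gcd_eq_one]; exact hcqp)
        (by
          have h := Int.odd_iff.mp hqo
          rw [sq, Int.mul_emod, h]; decide)
        hb
    have hcmn' : IsCoprime m' n' := Int.isCoprime_iff_gcd_eq_one.mpr hmn'
    have hp2' : m' * n' = p ^ 2 := by linarith [hp2]
    have hmn'_pos : 0 < m' * n' := by rw [hp2']; positivity
    have hm'_pos : 0 < m' := by
      rcases lt_or_eq_of_le hm0' with h | h
      · exact h
      · rw [← h] at hmn'_pos; simp at hmn'_pos
    have hn'_pos : 0 < n' := by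
      by_contra hn
      push_neg at hn
      have h0 : m' * n' ≤ 0 := mul_nonpos_iff.mpr (Or.inl ⟨le_of_lt hm'_pos, hn⟩)
      linarith
    obtain ⟨e, he0, hesq⟩ := pos_sq_of_coprime hcmn' hp2' hm'_pos
    obtain ⟨f, hf0, hfsq⟩ := pos_sq_of_coprime hcmn'.symm (by linarith : n' * m' = p ^ 2) hn'_pos
    have heqf : e ^ 4 = f ^ 4 + q ^ 2 := by
      have : q ^ 2 = m' ^ 2 - n' ^ 2 := hq1
      rw [hesq, hfsq] at this
      linarith [this]
    have hcef : IsCoprime e f := by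
      have : IsCoprime (e ^ 2) (f ^ 2) := by rw [← hesq, ← hfsq]; exact hcmn'
      exact ((IsCoprime.pow_left_iff (by norm_num)).mp
        ((IsCoprime.pow_right_iff (by norm_num)).mp this))
    rcases hpar' with ⟨hme', hno'⟩ | ⟨hmo', hne'⟩
    · -- m' even → e even, f odd → mod 16 contradiction
      have hee : Even e := by
        have : Even m' := Int.even_iff.mpr hme'
        rw [hesq, Int.even_pow] at this
        exact this.1
      have hfo : Odd f := by
        rw [← Int.not_even_iff_odd]
        intro hfe
        have : Even n' := by rw [hfsq]; exact Int.even_pow.mpr ⟨hfe, by norm_num⟩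
        rw [Int.even_iff] at this; omega
      exact mod16_kill hee hfo heqf
    · -- n' even → f even, recurse
      have hfe : Even f := by
        have : Even n' := Int.even_iff.mpr hne'
        rw [hfsq, Int.even_pow] at this
        exact this.1
      have helt : e < b := by
        have he1 : (1 : ℤ) ≤ e := he0
        have h1 : e ≤ e ^ 2 := le_self_pow₀ he1 two_ne_zero
        have hm'1 : (1 : ℤ) ≤ m' := hm'_pos
        have h2 : m' < b := by
          rw [hb']
          have h3 : m' ≤ m' ^ 2 := le_self_pow₀ hm'1 two_ne_zero
          have h4 : 0 < n' ^ 2 := by positivity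
          linarith
        linarith [h1, h2, hesq]
      have hNe : e.natAbs ≤ N := by
        have h1 : e.natAbs < b.natAbs := by
          exact Int.natAbs_lt_natAbs_of_nonneg_of_lt (le_of_lt he0) helt
        omega
      exact ih e f q hNe he0 hf0 hq hcef hfe heqf

theorem stmt_12 :
    ¬ ∃ a b c d : ℕ, 0 < a ∧ 0 < b ∧ 0 < c ∧ 0 < d ∧
      Even a ∧ Nat.gcd a b = 1 ∧ Nat.gcd c d = 1 ∧ d < c ∧
      b ^ 2 * (c ^ 2 - d ^ 2) = a ^ 2 * (c ^ 2 + d ^ 2) := by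
  rintro ⟨a, b, c, d, ha, hb, hc, hd, haE, hab, hcd, hdc, heq⟩
  have hd2c2 : d ^ 2 ≤ c ^ 2 := Nat.pow_le_pow_left (le_of_lt hdc) 2
  zify [hd2c2] at heq
  have haZ : (0 : ℤ) < (a : ℤ) := by exact_mod_cast ha
  have hbZ : (0 : ℤ) < (b : ℤ) := by exact_mod_cast hb
  have hcZ : (0 : ℤ) < (c : ℤ) := by exact_mod_cast hc
  have hdZ : (0 : ℤ) < (d : ℤ) := by exact_mod_cast hd
  have hdcZ : (d : ℤ) < (c : ℤ) := by exact_mod_cast hdc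
  have haEZ : Even (a : ℤ) := by exact_mod_cast haE.natCast (α := ℤ)
  have hcoAB : IsCoprime (a : ℤ) (b : ℤ) := by
    rw [Int.isCoprime_iff_gcd_eq_one, Int.gcd_natCast_natCast]; exact hab
  have hcoCD : IsCoprime (c : ℤ) (d : ℤ) := by
    rw [Int.isCoprime_iff_gcd_eq_one, Int.gcd_natCast_natCast]; exact hcd
  -- a^2 divides c^2 - d^2
  have hdvd : ((a : ℤ) ^ 2) ∣ ((c : ℤ) ^ 2 - (d : ℤ) ^ 2) := by
    have h1 : ((a : ℤ) ^ 2) ∣ (b : ℤ) ^ 2 * ((c : ℤ) ^ 2 - (d : ℤ) ^ 2) :=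
      ⟨(c : ℤ) ^ 2 + (d : ℤ) ^ 2, heq⟩
    exact (hcoAB.pow (n := 2) (m := 2)).dvd_of_dvd_mul_left h1
  obtain ⟨k, hk⟩ := hdvd
  have hk2 : (c : ℤ) ^ 2 + (d : ℤ) ^ 2 = (b : ℤ) ^ 2 * k := by
    have h2 : (a : ℤ) ^ 2 * ((b : ℤ) ^ 2 * k) = (a : ℤ) ^ 2 * ((c : ℤ) ^ 2 + (d : ℤ) ^ 2) := by
      rw [← heq, hk]; ring
    exact (mul_left_cancel₀ (pow_ne_zero 2 (ne_of_gt haZ)) h2).symm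
  have hkpos : 0 < k := by
    have h3 : (0 : ℤ) < (c : ℤ) ^ 2 - (d : ℤ) ^ 2 := by nlinarith [hdcZ, hdZ]
    rw [hk] at h3
    by_contra hkn
    push_neg at hkn
    have h4 : (a : ℤ) ^ 2 * k ≤ 0 :=
      mul_nonpos_iff.mpr (Or.inl ⟨sq_nonneg _, hkn⟩)
    linarith
  have hkdvd : k ∣ 2 := by
    obtain ⟨u, v, huv⟩ := (hcoCD.pow (n := 2) (m := 2))
    exact ⟨u * ((a : ℤ) ^ 2 + (b : ℤ) ^ 2) + v * ((b : ℤ) ^ 2 - (a : ℤ) ^ 2), by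
      linear_combination (-2 : ℤ) * huv + (u - v) * hk + (u + v) * hk2⟩
  have hkle : k ≤ 2 := Int.le_of_dvd (by norm_num) hkdvd
  interval_cases k
  · -- k = 1 : c^2 - d^2 = a^2, c^2 + d^2 = b^2, a even: impossible mod 4
    rw [mul_one] at hk hk2
    have hodd_c : Odd (c : ℤ) := by
      rw [← Int.not_even_iff_odd]
      intro hce
      have h5 : Even ((c : ℤ) ^ 2 - (d : ℤ) ^ 2) := by
        rw [hk]
        exact Int.even_pow.mpr ⟨haEZ, by norm_num⟩
      have h6 : Even ((d : ℤ) ^ 2) := by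
        have := (Int.even_sub.mp h5).mp (Int.even_pow.mpr ⟨hce, by norm_num⟩)
        exact this
      rw [Int.even_pow] at h6
      exact not_both_even hcoCD hce h6.1
    have hodd_d : Odd (d : ℤ) := by
      rw [← Int.not_even_iff_odd]
      intro hde
      have h5 : Even ((c : ℤ) ^ 2 - (d : ℤ) ^ 2) := by
        rw [hk]
        exact Int.even_pow.mpr ⟨haEZ, by norm_num⟩
      have h6 : Even ((c : ℤ) ^ 2) := by
        have := (Int.even_sub.mp h5).mpr (Int.even_pow.mpr ⟨hde, by norm_num⟩)
        exact this
      rw [Int.even_pow] at h6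
      exact not_both_even hcoCD h6.1 hde
    obtain ⟨u, hu⟩ := hodd_c
    obtain ⟨v, hv⟩ := hodd_d
    have h4 : (((c : ℤ) : ZMod 4)) ^ 2 + (((d : ℤ) : ZMod 4)) ^ 2 = (((b : ℤ) : ZMod 4)) ^ 2 := by
      exact_mod_cast congrArg (fun t : ℤ => (t : ZMod 4)) hk2
    rw [hu, hv] at h4
    push_cast at h4
    exact aux4 (u : ZMod 4) (v : ZMod 4) ((b : ℤ) : ZMod 4) h4
  · -- k = 2 : c^2 = a^2 + b^2, d^2 = b^2 - a^2
    have hc2 : (c : ℤ) ^ 2 = (a : ℤ) ^ 2 + (b : ℤ) ^ 2 := by linarith [hk, hk2]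
    have hd2 : (d : ℤ) ^ 2 = (b : ℤ) ^ 2 - (a : ℤ) ^ 2 := by linarith [hk, hk2]
    have heq4 : (b : ℤ) ^ 4 = (a : ℤ) ^ 4 + ((c : ℤ) * (d : ℤ)) ^ 2 := by
      linear_combination (-(d : ℤ) ^ 2) * hc2 + (-((a : ℤ) ^ 2 + (b : ℤ) ^ 2)) * hd2
    exact descent (b : ℤ).natAbs (b : ℤ) (a : ℤ) ((c : ℤ) * (d : ℤ)) le_rfl hbZ haZ
      (mul_pos hcZ hdZ) hcoAB.symm haEZ heq4
end

section
/- Suppose a, b, c, d, k are positive integers with gcd(c,d)=1 and 5c² = k(a² + b²) and 5d² = k(b² − 4a²). Then k = 5. -/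
/-! For `k = 1` the two equations say that `(a, d, c)` and `(2c, d, b)` are Pythagorean triples,
which forces `d` even and `c` odd. Parametrizing the primitive triples `(c, d/2, b/2)` and
`(a, d, c)` gives `c = p² - q² = u² + 4v²` with `uv = pq`, `u` odd and `p, q` coprime. Writing
`u = u₁u₂`, `v = v₁v₂`, `p = u₁v₁`, `q = u₂v₂`, this becomes
`v₁²(u₁² - 4v₂²) = u₂²(u₁² + v₂²)`, so `u₁² + v₂² = w v₁²` and `u₁² - 4v₂² = w u₂²` for some `w`
dividing the difference `5v₂²`, hence `w ∣ 5`. Then `(u₂, 2v₁, u₁, 2v₂)` (for `w = 1`) or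
`(v₂, u₁, v₁, u₂)` (for `w = 5`) is a solution with `c' ≤ p < c`: infinite descent.
Finally `k ∣ 5` since `c` and `d` are coprime, and `k = 1` is excluded. -/

theorem Int.eq_one_or_five_of_dvd_five {w : ℤ} (hw : 0 < w) (h : w ∣ 5) : w = 1 ∨ w = 5 := by
  have := Int.le_of_dvd (by norm_num) h
  interval_cases w <;> omega

theorem IsCoprime.dvd_of_dvd_mul_of_dvd_mul {R : Type*} [CommRing R] {x y k n : R}
    (hxy : IsCoprime x y) (hx : k ∣ n * x) (hy : k ∣ n * y) : k ∣ n := by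
  obtain ⟨α, β, h⟩ := hxy
  have : n = α * (n * x) + β * (n * y) := by linear_combination -n * h
  rw [this]
  exact dvd_add (hx.mul_left α) (hy.mul_left β)

theorem Int.exists_eq_mul_of_mul_eq_mul {u v p q : ℤ} (hu : 0 < u) (hv : 0 < v) (hp : 0 < p)
    (h : u * v = p * q) :
    ∃ u₁ u₂ v₁ v₂ : ℤ, 0 < u₁ ∧ 0 < u₂ ∧ 0 < v₁ ∧ 0 < v₂ ∧
      u = u₁ * u₂ ∧ v = v₁ * v₂ ∧ p = u₁ * v₁ ∧ q = u₂ * v₂ := by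
  have hq : 0 < q := pos_of_mul_pos_right (h ▸ mul_pos hu hv) hp.le
  lift u to ℕ using hu.le
  lift v to ℕ using hv.le
  lift p to ℕ using hp.le
  lift q to ℕ using hq.le
  have h' : u * v = p * q := by exact_mod_cast h
  obtain ⟨u₁, v₁, ⟨u₂, rfl⟩, ⟨v₂, rfl⟩, rfl⟩ := Nat.dvd_mul.mp (Dvd.intro q h'.symm)
  have hq' : q = u₂ * v₂ := by
    apply Nat.eq_of_mul_eq_mul_left (by exact_mod_cast hp : 0 < u₁ * v₁)
    rw [← h']
    ring
  subst hq'
  obtain ⟨hu₁, hu₂⟩ := CanonicallyOrderedAdd.mul_pos.mp (by exact_mod_cast hu : 0 < u₁ * u₂)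
  obtain ⟨hv₁, hv₂⟩ := CanonicallyOrderedAdd.mul_pos.mp (by exact_mod_cast hv : 0 < v₁ * v₂)
  exact ⟨u₁, u₂, v₁, v₂, by exact_mod_cast hu₁, by exact_mod_cast hu₂, by exact_mod_cast hv₁,
    by exact_mod_cast hv₂, by push_cast; ring, by push_cast; ring, by push_cast; ring,
    by push_cast; ring⟩

theorem Int.exists_params_of_sq_add_sq_eq_sq {x y z : ℤ} (hx : Odd x) (hy : 0 < y)
    (hxy : IsCoprime x y) (h : x ^ 2 + y ^ 2 = z ^ 2) :
    ∃ m n : ℤ, 0 < m ∧ 0 < n ∧ IsCoprime m n ∧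
      x = m ^ 2 - n ^ 2 ∧ y = 2 * m * n ∧ |z| = m ^ 2 + n ^ 2 := by
  have hz : 0 < |z| := abs_pos.mpr (by rintro rfl; nlinarith)
  have htriple : PythagoreanTriple x y |z| := by
    simp only [PythagoreanTriple, ← sq, sq_abs, h]
  obtain ⟨m, n, hxmn, hymn, hzmn, hmn, -, hm⟩ := htriple.coprime_classification'
    (Int.isCoprime_iff_gcd_eq_one.mp hxy) (Int.odd_iff.mp hx) hz
  have hm : 0 < m := hm.lt_of_ne (by rintro rfl; simp at hymn; omega)
  have hn : 0 < n := by nlinarith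
  exact ⟨m, n, hm, hn, Int.isCoprime_iff_gcd_eq_one.mpr hmn, hxmn, hymn, hzmn⟩

theorem Int.exists_odd_of_mul_eq_two_mul {s t p q : ℤ} (hs : 0 < s) (ht : 0 < t)
    (hodd : Odd (s ^ 2 + t ^ 2)) (h : s * t = 2 * (p * q)) :
    ∃ u v : ℤ, 0 < u ∧ 0 < v ∧ Odd u ∧ u * v = p * q ∧ s ^ 2 + t ^ 2 = u ^ 2 + 4 * v ^ 2 := by
  rcases Int.even_or_odd s with hs_even | hs_odd
  · have ht_odd : Odd t := by simpa [Int.odd_add', Int.even_pow, hs_even, parity_simps] using hodd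
    obtain ⟨v, rfl⟩ := hs_even
    exact ⟨t, v, ht, by omega, ht_odd,
      mul_left_cancel₀ two_ne_zero (by linear_combination h), by ring⟩
  · obtain ⟨v, rfl⟩ : Even t := by
      simpa [Int.odd_add, Int.even_pow, hs_odd, parity_simps] using hodd
    exact ⟨s, v, hs, by omega, hs_odd,
      mul_left_cancel₀ two_ne_zero (by linear_combination h), by ring⟩

theorem exists_eq_one_or_five_of_sq_mul_eq_sq_mul {u₁ u₂ v₁ v₂ : ℤ} (hv₂ : 0 < v₂)
    (h₁ : IsCoprime v₁ u₂) (h₂ : IsCoprime u₁ v₂)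
    (h : v₁ ^ 2 * (u₁ ^ 2 - 4 * v₂ ^ 2) = u₂ ^ 2 * (u₁ ^ 2 + v₂ ^ 2)) :
    ∃ w : ℤ, (w = 1 ∨ w = 5) ∧
      u₁ ^ 2 + v₂ ^ 2 = v₁ ^ 2 * w ∧ u₁ ^ 2 - 4 * v₂ ^ 2 = u₂ ^ 2 * w := by
  obtain ⟨w, hw⟩ : v₁ ^ 2 ∣ u₁ ^ 2 + v₂ ^ 2 := h₁.pow.dvd_of_dvd_mul_left ⟨_, h.symm⟩
  have hpos : 0 < v₁ ^ 2 * w := hw ▸ by positivity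
  have hw_pos : 0 < w := pos_of_mul_pos_right hpos (sq_nonneg v₁)
  have hv₁ : v₁ ^ 2 ≠ 0 := (pos_of_mul_pos_left hpos hw_pos.le).ne'
  have hw₂ : u₁ ^ 2 - 4 * v₂ ^ 2 = u₂ ^ 2 * w :=
    mul_left_cancel₀ hv₁ (by rw [h, hw]; ring)
  have hw_coprime : IsCoprime w v₂ :=
    (h₂.pow_left.add_mul_left_left v₂).of_isCoprime_of_dvd_left ⟨v₁ ^ 2, by rw [← sq, hw]; ring⟩
  have hw_dvd : w ∣ 5 * v₂ ^ 2 := ⟨v₁ ^ 2 - u₂ ^ 2, by linear_combination hw - hw₂⟩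
  exact ⟨w, Int.eq_one_or_five_of_dvd_five hw_pos
    (hw_coprime.pow_right.dvd_of_dvd_mul_right hw_dvd), hw, hw₂⟩

structure IsPythagoreanPair (a b c d : ℤ) : Prop where
  c_pos : 0 < c
  d_pos : 0 < d
  coprime : IsCoprime c d
  sq_c : c ^ 2 = a ^ 2 + d ^ 2
  sq_b : b ^ 2 = 4 * c ^ 2 + d ^ 2

namespace IsPythagoreanPair

variable {a b c d : ℤ}

theorem even_d (h : IsPythagoreanPair a b c d) : Even d := by
  by_contra hd
  obtain ⟨e, rfl⟩ := Int.not_even_iff_odd.mp hd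
  have mod_eight : ∀ x y z e : ZMod 8,
      x ^ 2 = 4 * y ^ 2 + (2 * e + 1) ^ 2 → y ^ 2 = z ^ 2 + (2 * e + 1) ^ 2 → False := by
    decide
  exact mod_eight b c a e (by exact_mod_cast congrArg (Int.cast : ℤ → ZMod 8) h.sq_b)
    (by exact_mod_cast congrArg (Int.cast : ℤ → ZMod 8) h.sq_c)

theorem odd_c (h : IsPythagoreanPair a b c d) : Odd c := by
  refine Int.not_even_iff_odd.mp fun hc => ?_
  have := h.coprime.isUnit_of_dvd' (even_iff_two_dvd.mp hc) (even_iff_two_dvd.mp h.even_d)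
  norm_num [Int.isUnit_iff] at this

theorem exists_params (h : IsPythagoreanPair a b c d) :
    ∃ p q s t : ℤ, 0 < p ∧ 0 < q ∧ 0 < s ∧ 0 < t ∧ IsCoprime p q ∧
      c = p ^ 2 - q ^ 2 ∧ c = s ^ 2 + t ^ 2 ∧ s * t = 2 * (p * q) := by
  have hc_odd := h.odd_c
  have hd := h.d_pos
  have hd_even := h.even_d
  have ha_odd : Odd a := by
    have : Odd (a ^ 2 + d ^ 2) := h.sq_c ▸ hc_odd.pow
    simpa [Int.odd_add, Int.even_pow, hd_even, parity_simps] using this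
  have had : IsCoprime a d := by
    have : IsCoprime (a ^ 2 + d * d) d := by rw [← sq, ← h.sq_c]; exact h.coprime.pow_left
    exact (IsCoprime.pow_left_iff two_pos).mp this.of_add_mul_left_left
  obtain ⟨D, hD⟩ := hd_even
  obtain ⟨B, hB⟩ : Even b := by
    have : Even (b ^ 2) := by rw [h.sq_b, hD]; exact ⟨2 * c ^ 2 + 2 * D ^ 2, by ring⟩
    exact (Int.even_pow.mp this).1
  have hcD : IsCoprime c D := h.coprime.of_isCoprime_of_dvd_right ⟨2, by rw [hD]; ring⟩
  have hcDB : c ^ 2 + D ^ 2 = B ^ 2 := mul_left_cancel₀ four_ne_zero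
    (by linear_combination (-1 : ℤ) * h.sq_b + (b + B + B) * hB - (d + D + D) * hD)
  obtain ⟨p, q, hp, hq, hpq, hc, hD', -⟩ :=
    Int.exists_params_of_sq_add_sq_eq_sq hc_odd (by omega) hcD hcDB
  obtain ⟨s, t, hs, ht, -, -, hst, hcst⟩ :=
    Int.exists_params_of_sq_add_sq_eq_sq ha_odd hd had h.sq_c.symm
  refine ⟨p, q, s, t, hp, hq, hs, ht, hpq, hc, by rwa [abs_of_pos h.c_pos] at hcst, ?_⟩
  linarith

theorem exists_lt (h : IsPythagoreanPair a b c d) :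
    ∃ a' b' c' d' : ℤ, IsPythagoreanPair a' b' c' d' ∧ c' < c := by
  obtain ⟨p, q, s, t, hp, hq, hs, ht, hpq, hcpq, hcst, hst⟩ := h.exists_params
  obtain ⟨u, v, hu, hv, hu_odd, huv, hcuv⟩ :=
    Int.exists_odd_of_mul_eq_two_mul hs ht (hcst ▸ h.odd_c) hst
  have hp_lt : p < c := by
    have hqp : q < p := by nlinarith [h.c_pos]
    nlinarith [mul_le_mul_of_nonneg_right (show 1 ≤ p - q by omega) (show 0 ≤ p + q by omega)]
  rw [← hcst] at hcuv
  obtain ⟨u₁, u₂, v₁, v₂, hu₁, hu₂, hv₁, hv₂, rfl, rfl, rfl, rfl⟩ :=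
    Int.exists_eq_mul_of_mul_eq_mul hu hv hp huv
  have h₁ : IsCoprime v₁ u₂ :=
    (hpq.of_isCoprime_of_dvd_left (dvd_mul_left _ _)).of_isCoprime_of_dvd_right (dvd_mul_right _ _)
  have h₂ : IsCoprime u₁ v₂ :=
    (hpq.of_isCoprime_of_dvd_left (dvd_mul_right _ _)).of_isCoprime_of_dvd_right (dvd_mul_left _ _)
  obtain ⟨w, rfl | rfl, hw₁, hw₂⟩ :=
    exists_eq_one_or_five_of_sq_mul_eq_sq_mul hv₂ h₁ h₂ (by linear_combination hcuv - hcpq)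
  · have hu₁_odd : Odd u₁ := (Int.odd_mul.mp hu_odd).1
    refine ⟨u₂, 2 * v₁, u₁, 2 * v₂, ⟨hu₁, by positivity,
      (Int.isCoprime_two_right.mpr hu₁_odd).mul_right h₂, by linear_combination hw₂,
      by linear_combination -4 * hw₁⟩, by nlinarith⟩
  · exact ⟨v₂, u₁, v₁, u₂, ⟨hv₁, hu₂, h₁, by linarith, by linarith⟩, by nlinarith⟩

end IsPythagoreanPair

theorem not_isPythagoreanPair (a b c d : ℤ) : ¬ IsPythagoreanPair a b c d := by
  induction hn : c.toNat using Nat.strong_induction_on generalizing a b c d with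
  | _ n ih =>
    intro h
    obtain ⟨a', b', c', d', h', hlt⟩ := h.exists_lt
    exact ih c'.toNat (by have := h'.c_pos; omega) a' b' c' d' rfl h'

theorem stmt_13_general (a b c d k : ℤ) (hc : 0 < c)
    (hd : 0 < d) (hk : 0 < k) (hcd : Int.gcd c d = 1)
    (h1 : 5 * c ^ 2 = k * (a ^ 2 + b ^ 2))
    (h2 : 5 * d ^ 2 = k * (b ^ 2 - 4 * a ^ 2)) :
    k = 5 := by
  have hcd' : IsCoprime c d := Int.isCoprime_iff_gcd_eq_one.mpr hcd
  have hk5 : k ∣ 5 := hcd'.pow.dvd_of_dvd_mul_of_dvd_mul ⟨_, h1⟩ ⟨_, h2⟩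
  rcases Int.eq_one_or_five_of_dvd_five hk hk5 with rfl | rfl
  · exact absurd ⟨hc, hd, hcd', by linarith, by linarith⟩ (not_isPythagoreanPair a b c d)
  · rfl

theorem stmt_13 (a b c d k : ℤ) (ha : 0 < a) (hb : 0 < b) (hc : 0 < c)
    (hd : 0 < d) (hk : 0 < k) (hcd : Int.gcd c d = 1)
    (h1 : 5 * c ^ 2 = k * (a ^ 2 + b ^ 2))
    (h2 : 5 * d ^ 2 = k * (b ^ 2 - 4 * a ^ 2)) :
    k = 5 :=
  stmt_13_general a b c d k hc hd hk hcd h1 h2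
end

section
/- There do not exist coprime positive integers a, b with a² + b² a perfect square and b² − 4a² a perfect square (with b² > 4a²). -/
/-!
Descent on `b`. Reduction mod 16 rules out odd `a`, so `a` is even; then `(b ± d) / 2` are coprime
squares, giving `a = S T`, `b = S² + T²` and `c² = S⁴ + 3 S² T² + T⁴`, with `S` even and `T` odd
say. Then `(2S² + 3T² - 2c)(2S² + 3T² + 2c) = 5T⁴` with coprime factors; choosing the sign of `c`
so that 5 divides the first one, the factors are `5u⁴` and `v⁴` with `T = uv`, and
`(v² - u²)(v² - 5u²) = 4S²`. The coprime integers `(v² - u²)/4` and `(v² - 5u²)/4` are either both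
squares, which gives the system again with odd `a = u`, or both minus squares `-Y²`, `-X²`, which
gives the smaller solution `(a, b) = (Y, u)` with `u ≤ T < b`.
-/

def IsSolution (a b : ℤ) : Prop :=
  0 < a ∧ 0 < b ∧ Int.gcd a b = 1 ∧ 4 * a ^ 2 < b ^ 2 ∧
    (∃ c : ℤ, a ^ 2 + b ^ 2 = c ^ 2) ∧ (∃ d : ℤ, b ^ 2 - 4 * a ^ 2 = d ^ 2)

theorem pos_and_pos_of_mul_pos_of_add_pos {R : Type*} [Ring R] [LinearOrder R]
    [IsStrictOrderedRing R] {x y : R} (hmul : 0 < x * y) (hadd : 0 < x + y) : 0 < x ∧ 0 < y := by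
  rcases pos_and_pos_or_neg_and_neg_of_mul_pos hmul with h | ⟨hx, hy⟩
  · exact h
  · exact absurd hadd (add_neg hx hy).not_gt

theorem Int.prime_five : Prime (5 : ℤ) := Int.prime_iff_natAbs_prime.mpr (by norm_num)

theorem Int.odd_of_isCoprime_of_even {m n : ℤ} (h : IsCoprime m n) (hm : Even m) : Odd n := by
  rw [← Int.not_even_iff_odd]
  intro hn
  exact Int.prime_two.not_isUnit (h.isUnit_of_dvd' hm.two_dvd hn.two_dvd)

theorem Int.exists_pos_pow_eq_of_isCoprime {x y z : ℤ} {k : ℕ} (hk : k ≠ 0)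
    (hxy : IsCoprime x y) (hx : 0 < x) (h : x * y = z ^ k) : ∃ u, 0 < u ∧ x = u ^ k := by
  obtain ⟨d, hd⟩ := exists_associated_pow_of_mul_eq_pow' hxy h
  have hdx : |d| ^ k = x := by
    rw [← abs_pow, ← abs_of_pos hx]
    rcases Int.associated_iff.mp hd with h | h <;> simp [h]
  refine ⟨|d|, abs_pos.mpr fun hd0 => ?_, hdx.symm⟩
  simp [hd0, hk] at hdx
  exact hx.ne hdx

theorem not_odd_of_sq_system {a b c d : ℤ} (h₁ : a ^ 2 + b ^ 2 = c ^ 2)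
    (h₂ : b ^ 2 - 4 * a ^ 2 = d ^ 2) : ¬ Odd a := by
  rintro ⟨x, rfl⟩
  have h₁' := congrArg (Int.cast : ℤ → ZMod 16) h₁
  have h₂' := congrArg (Int.cast : ℤ → ZMod 16) h₂
  push_cast at h₁' h₂'
  -- mod 16, `4 a² = 4` forces `b² = 4`, and then `c² = a² + 4 ∈ {5, 13}` is not a square
  have hb : ∀ x b d : ZMod 16, b ^ 2 - 4 * (2 * x + 1) ^ 2 = d ^ 2 → b ^ 2 = 4 := by decide
  have hc : ∀ x c : ZMod 16, (2 * x + 1) ^ 2 + 4 ≠ c ^ 2 := by decide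
  exact hc _ _ (hb _ _ _ h₂' ▸ h₁')

theorem exists_eq_mul_and_eq_sq_add_sq {a b d : ℤ} (ha : 0 < a) (hb : 0 < b)
    (hab : IsCoprime a b) (hd : b ^ 2 - 4 * a ^ 2 = d ^ 2) :
    ∃ S T : ℤ, 0 < S ∧ 0 < T ∧ IsCoprime S T ∧ a = S * T ∧ b = S ^ 2 + T ^ 2 := by
  obtain ⟨p, hp⟩ : Even (b + d) := by
    have : Even (b ^ 2 - d ^ 2) := ⟨2 * a ^ 2, by linear_combination hd⟩
    simp [Int.even_add, Int.even_sub, parity_simps] at this ⊢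
    exact this
  obtain ⟨q, rfl⟩ : ∃ q, b = p + q := ⟨b - p, by ring⟩
  have hpq : p * q = a ^ 2 := by
    have : 4 * (p * q) = 4 * a ^ 2 := by linear_combination hd + (d + p - q) * hp
    linarith
  have hcop : IsCoprime p q := by
    have h : IsCoprime (p * q) (p + q) := hpq ▸ hab.pow_left
    exact IsCoprime.add_mul_left_right_iff.mp (by rw [mul_one, add_comm]; exact h.of_mul_left_left)
  obtain ⟨hp0, hq0⟩ := pos_and_pos_of_mul_pos_of_add_pos (hpq ▸ by positivity) hb
  obtain ⟨S, hS, rfl⟩ := Int.exists_pos_pow_eq_of_isCoprime two_ne_zero hcop hp0 hpq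
  obtain ⟨T, hT, rfl⟩ :=
    Int.exists_pos_pow_eq_of_isCoprime two_ne_zero hcop.symm hq0 ((mul_comm _ _).trans hpq)
  refine ⟨S, T, hS, hT, (IsCoprime.pow_iff two_pos two_pos).mp hcop, ?_, rfl⟩
  exact (pow_left_inj₀ ha.le (by positivity) two_ne_zero).mp (by rw [← hpq]; ring)

theorem exists_isSolution_of_mul_eq_sq {u v r : ℤ} (hu : 0 < u) (huo : Odd u) (hvo : Odd v)
    (huv : IsCoprime u v) (hr : r ≠ 0) (h : (v ^ 2 - u ^ 2) * (v ^ 2 - 5 * u ^ 2) = (4 * r) ^ 2) :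
    ∃ a, IsSolution a u := by
  obtain ⟨G, hG⟩ : ∃ G, v ^ 2 - u ^ 2 = 4 * G := by
    obtain ⟨m, rfl⟩ := huo
    obtain ⟨n, rfl⟩ := hvo
    exact ⟨n ^ 2 + n - m ^ 2 - m, by ring⟩
  have hGH : G * (G - u ^ 2) = r ^ 2 := by
    have : 16 * (G * (G - u ^ 2)) = 16 * r ^ 2 := by
      linear_combination h - (4 * G + (v ^ 2 - u ^ 2) - 4 * u ^ 2) * hG
    linarith
  have hGu : IsCoprime G u := by
    have h : IsCoprime (v ^ 2 - u * u) u := IsCoprime.sub_mul_left_left_iff.mpr huv.symm.pow_left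
    rw [← sq, hG] at h
    exact h.of_mul_left_right
  have hcop : IsCoprime G (G - u ^ 2) := by
    rw [show G - u ^ 2 = -u ^ 2 + G * 1 by ring, IsCoprime.add_mul_left_right_iff]
    exact hGu.pow_right.neg_right
  have hr2 : 0 < r ^ 2 := by positivity
  rcases lt_or_gt_of_ne (left_ne_zero_of_mul (hGH ▸ hr2.ne')) with hneg | hpos
  · obtain ⟨Y, hY, hYG⟩ := Int.exists_pos_pow_eq_of_isCoprime two_ne_zero hcop.neg_neg
      (neg_pos.mpr hneg) (by rw [neg_mul_neg]; exact hGH)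
    obtain ⟨X, -, hXH⟩ := Int.exists_pos_pow_eq_of_isCoprime two_ne_zero hcop.neg_neg.symm
      (by nlinarith) (by rw [neg_mul_neg, mul_comm]; exact hGH)
    have hYu : IsCoprime Y u := by
      rw [← IsCoprime.pow_left_iff two_pos, ← hYG]
      exact hGu.neg_left
    refine ⟨Y, hY, hu, Int.isCoprime_iff_gcd_eq_one.mp hYu, ?_, ⟨X, ?_⟩, ⟨v, ?_⟩⟩
    · have hv : v ≠ 0 := by rintro rfl; simp at hvo
      nlinarith [sq_pos_of_ne_zero hv]
    · linear_combination hXH - hYG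
    · linear_combination 4 * hYG - hG
  · obtain ⟨Y, -, hYG⟩ := Int.exists_pos_pow_eq_of_isCoprime two_ne_zero hcop hpos hGH
    obtain ⟨X, -, hXH⟩ := Int.exists_pos_pow_eq_of_isCoprime two_ne_zero hcop.symm
      (pos_of_mul_pos_right (hGH ▸ hr2) hpos.le) (by rw [mul_comm]; exact hGH)
    exact absurd huo (not_odd_of_sq_system (b := 2 * Y) (c := v) (d := 2 * X)
      (by linear_combination -4 * hYG - hG) (by linear_combination 4 * hXH - 4 * hYG))

theorem quartic_factors_mul {s t c : ℤ} (hc : c ^ 2 = s ^ 4 + 3 * s ^ 2 * t ^ 2 + t ^ 4) :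
    (2 * s ^ 2 + 3 * t ^ 2 - 2 * c) * (2 * s ^ 2 + 3 * t ^ 2 + 2 * c) = 5 * t ^ 4 := by
  linear_combination -4 * hc

theorem isCoprime_quartic_factors {s t c : ℤ} (hst : IsCoprime s t) (ht : Odd t)
    (hc : c ^ 2 = s ^ 4 + 3 * s ^ 2 * t ^ 2 + t ^ 4) :
    IsCoprime (2 * s ^ 2 + 3 * t ^ 2 - 2 * c) (2 * s ^ 2 + 3 * t ^ 2 + 2 * c) := by
  have hPQ := quartic_factors_mul hc
  have hP : Odd (2 * s ^ 2 + 3 * t ^ 2 - 2 * c) := by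
    obtain ⟨k, rfl⟩ := ht
    exact ⟨s ^ 2 + 6 * k ^ 2 + 6 * k + 1 - c, by ring⟩
  refine isCoprime_of_prime_dvd (fun h => by simp [h.1] at hP) fun z hz hzP hzQ => ?_
  have h2P : IsCoprime 2 (2 * s ^ 2 + 3 * t ^ 2 - 2 * c) :=
    Int.prime_two.coprime_iff_not_dvd.mpr fun h =>
      Int.not_even_iff_odd.mpr hP (even_iff_two_dvd.mpr h)
  have hz2 : ¬ z ∣ 2 := fun hz2 => hz.not_isUnit (h2P.isUnit_of_dvd' hz2 hzP)
  have hzt : z ∣ t := by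
    by_contra hzt
    have hzt' : IsCoprime z t := hz.coprime_iff_not_dvd.mpr hzt
    have hzzt : IsCoprime (z * z) (t ^ 4) := (hzt'.mul_left hzt').pow_right
    exact hz.not_isUnit (Int.prime_five.squarefree z
      (hzzt.dvd_of_dvd_mul_right (hPQ ▸ mul_dvd_mul hzP hzQ)))
  have hzs : z ∣ s := by
    have h : z ∣ 2 * (2 * s ^ 2) := by
      rw [show 2 * (2 * s ^ 2) = (2 * s ^ 2 + 3 * t ^ 2 - 2 * c) + (2 * s ^ 2 + 3 * t ^ 2 + 2 * c)
        - 6 * t ^ 2 by ring]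
      exact dvd_sub (dvd_add hzP hzQ) (dvd_mul_of_dvd_right (dvd_pow hzt two_ne_zero) _)
    have h' : z ∣ 2 * s ^ 2 := (hz.dvd_or_dvd h).resolve_left hz2
    exact hz.dvd_of_dvd_pow ((hz.dvd_or_dvd h').resolve_left hz2)
  exact hz.not_isUnit (hst.isUnit_of_dvd' hzs hzt)

theorem exists_isSolution_of_quartic_of_five_dvd {s t c : ℤ} (ht : 0 < t) (hst : IsCoprime s t)
    (hs : Even s) (hs0 : s ≠ 0) (hto : Odd t) (hc : c ^ 2 = s ^ 4 + 3 * s ^ 2 * t ^ 2 + t ^ 4)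
    (h5 : 5 ∣ 2 * s ^ 2 + 3 * t ^ 2 - 2 * c) : ∃ a b, IsSolution a b ∧ b ≤ t := by
  have hPQ := quartic_factors_mul hc
  obtain ⟨hP, hQ⟩ := pos_and_pos_of_mul_pos_of_add_pos (by rw [hPQ]; positivity)
    (by nlinarith [sq_nonneg s, pow_pos ht 2])
  obtain ⟨P, hP5⟩ := h5
  have hPQ' : P * (2 * s ^ 2 + 3 * t ^ 2 + 2 * c) = t ^ 4 := by
    have : 5 * (P * (2 * s ^ 2 + 3 * t ^ 2 + 2 * c)) = 5 * t ^ 4 := by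
      rw [← hPQ, hP5]; ring
    linarith
  have hcop : IsCoprime P (2 * s ^ 2 + 3 * t ^ 2 + 2 * c) :=
    (isCoprime_quartic_factors hst hto hc).of_isCoprime_of_dvd_left (Dvd.intro_left 5 hP5.symm)
  obtain ⟨u, hu, hPu⟩ := Int.exists_pos_pow_eq_of_isCoprime four_ne_zero hcop (by linarith) hPQ'
  obtain ⟨v, hv, hQv⟩ := Int.exists_pos_pow_eq_of_isCoprime four_ne_zero hcop.symm hQ
    ((mul_comm _ _).trans hPQ')
  have huv : u * v = t :=
    (pow_left_inj₀ (by positivity) ht.le four_ne_zero).mp (by rw [mul_pow, ← hPu, ← hQv, hPQ'])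
  obtain ⟨r, rfl⟩ := hs
  subst huv
  have hkey : (v ^ 2 - u ^ 2) * (v ^ 2 - 5 * u ^ 2) = (4 * r) ^ 2 := by
    linear_combination -hP5 - hQv - 5 * hPu
  obtain ⟨huo, hvo⟩ := Int.odd_mul.mp hto
  obtain ⟨a, ha⟩ := exists_isSolution_of_mul_eq_sq hu huo hvo
    ((IsCoprime.pow_iff four_pos four_pos).mp (hPu ▸ hQv ▸ hcop)) (by rintro rfl; simp at hs0) hkey
  exact ⟨a, u, ha, le_mul_of_one_le_right hu.le hv⟩

theorem exists_isSolution_of_quartic {s t c : ℤ} (ht : 0 < t) (hst : IsCoprime s t)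
    (hs : Even s) (hs0 : s ≠ 0) (hto : Odd t) (hc : c ^ 2 = s ^ 4 + 3 * s ^ 2 * t ^ 2 + t ^ 4) :
    ∃ a b, IsSolution a b ∧ b ≤ t := by
  have h5 : 5 ∣ (2 * s ^ 2 + 3 * t ^ 2 - 2 * c) * (2 * s ^ 2 + 3 * t ^ 2 + 2 * c) :=
    ⟨t ^ 4, quartic_factors_mul hc⟩
  rcases Int.prime_five.dvd_or_dvd h5 with h5 | h5
  · exact exists_isSolution_of_quartic_of_five_dvd ht hst hs hs0 hto hc h5
  · exact exists_isSolution_of_quartic_of_five_dvd (c := -c) ht hst hs hs0 hto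
      (by linear_combination hc) (by rwa [mul_neg, sub_neg_eq_add])

theorem IsSolution.exists_lt {a b : ℤ} (h : IsSolution a b) :
    ∃ a' b', IsSolution a' b' ∧ b' < b := by
  obtain ⟨ha, hb, hab, -, ⟨c, hc⟩, ⟨d, hd⟩⟩ := h
  obtain ⟨S, T, hS, hT, hST, rfl, rfl⟩ :=
    exists_eq_mul_and_eq_sq_add_sq ha hb (Int.isCoprime_iff_gcd_eq_one.mpr hab) hd
  have hquartic : c ^ 2 = S ^ 4 + 3 * S ^ 2 * T ^ 2 + T ^ 4 := by linear_combination -hc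
  rcases Int.even_mul.mp (Int.not_odd_iff_even.mp (not_odd_of_sq_system hc hd)) with hSe | hTe
  · obtain ⟨a', b', h', hle⟩ := exists_isSolution_of_quartic hT hST hSe hS.ne'
      (Int.odd_of_isCoprime_of_even hST hSe) hquartic
    exact ⟨a', b', h', by nlinarith⟩
  · obtain ⟨a', b', h', hle⟩ := exists_isSolution_of_quartic (c := c) hS hST.symm hTe hT.ne'
      (Int.odd_of_isCoprime_of_even hST.symm hTe) (by linear_combination hquartic)
    exact ⟨a', b', h', by nlinarith⟩

theorem stmt_14 :
    ¬ ∃ a b : ℤ, 0 < a ∧ 0 < b ∧ Int.gcd a b = 1 ∧ 4 * a ^ 2 < b ^ 2 ∧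
      (∃ c : ℤ, a ^ 2 + b ^ 2 = c ^ 2) ∧ (∃ d : ℤ, b ^ 2 - 4 * a ^ 2 = d ^ 2) := by
  rintro ⟨a, b, h⟩
  induction hn : b.toNat using Nat.strong_induction_on generalizing a b with
  | _ n ih =>
    obtain ⟨a', b', h', hlt⟩ := IsSolution.exists_lt h
    exact ih b'.toNat (by have := h'.2.1; omega) a' b' h' rfl
end

section
/- There do not exist coprime positive integers a, b with both a² + b² and b² − a² perfect squares. -/
/-!
Put `c² = a² + b²` and `d² = b² - a²`. Then `c ≡ d (mod 2)`, and `P = (c + d)/2`, `Q = (c - d)/2`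
are coprime legs of a right triangle with hypotenuse `b` and `2PQ = a²`. Euclid's parametrization
`{P, Q} = {2mn, m² - n²}`, `b = m² + n²` makes `mn(m - n)(m + n)` a square whose four factors are
pairwise coprime, so `m = w²`, `n = x²` and `m ∓ n` are squares: `(x, w)` is again such a pair,
with `w ≤ m < b`. Infinite descent finishes the proof.
-/

theorem Int.exists_pos_sq_of_isCoprime_of_mul_eq_sq_s15 {a b c : ℤ} (hab : IsCoprime a b)
    (h : a * b = c ^ 2) (ha : 0 < a) : ∃ r, 0 < r ∧ a = r ^ 2 := by
  obtain ⟨r, hr | hr⟩ := Int.sq_of_isCoprime hab h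
  · refine ⟨|r|, abs_pos.mpr ?_, by rw [sq_abs, hr]⟩
    rintro rfl
    simp [hr] at ha
  · nlinarith [sq_nonneg r]

theorem Int.isCoprime_sub_add {m n : ℤ} (h : IsCoprime m n) (hodd : Odd (m + n)) :
    IsCoprime (m - n) (m + n) := by
  have hsub : Odd (m - n) := by simpa [two_mul] using hodd.sub_even (even_two_mul n)
  have hn : IsCoprime (m - n) n := by simpa using (IsCoprime.sub_mul_right_left_iff (z := 1)).mpr h
  rw [show m + n = 2 * n + (m - n) * 1 by ring, IsCoprime.add_mul_left_right_iff]
  exact (Int.isCoprime_two_right.mpr hsub).mul_right hn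

theorem Int.exists_sq_of_mul_mul_mul_eq_sq {m n T : ℤ} (hmn : IsCoprime m n)
    (hodd : Odd (m + n)) (hn : 0 < n) (hnm : n < m) (h : m * n * (m - n) * (m + n) = T ^ 2) :
    ∃ w x, 0 < w ∧ 0 < x ∧ m = w ^ 2 ∧ n = x ^ 2 ∧ (∃ y, m - n = y ^ 2) ∧ ∃ z, m + n = z ^ 2 := by
  have hm_sub : IsCoprime m (m - n) := by
    simpa using (IsCoprime.mul_sub_left_right_iff (z := 1)).mpr hmn
  have hm_add : IsCoprime m (m + n) := by simpa using hmn.mul_add_left_right 1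
  have hn_sub : IsCoprime n (m - n) := by
    simpa [sub_eq_add_neg] using hmn.symm.add_mul_left_right (-1)
  have hn_add : IsCoprime n (m + n) := by simpa using hmn.symm.add_mul_left_right 1
  have hsub_add := Int.isCoprime_sub_add hmn hodd
  obtain ⟨w, hw, rfl⟩ := Int.exists_pos_sq_of_isCoprime_of_mul_eq_sq_s15
    (hmn.mul_right (hm_sub.mul_right hm_add)) (by rw [← h]; ring) (by omega)
  obtain ⟨x, hx, rfl⟩ := Int.exists_pos_sq_of_isCoprime_of_mul_eq_sq_s15
    (hmn.symm.mul_right (hn_sub.mul_right hn_add)) (by rw [← h]; ring) hn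
  obtain ⟨y, -, hy⟩ := Int.exists_pos_sq_of_isCoprime_of_mul_eq_sq_s15
    (hm_sub.symm.mul_right (hn_sub.symm.mul_right hsub_add)) (by rw [← h]; ring) (by omega)
  obtain ⟨z, -, hz⟩ := Int.exists_pos_sq_of_isCoprime_of_mul_eq_sq_s15
    (hm_add.symm.mul_right (hn_add.symm.mul_right hsub_add.symm)) (by rw [← h]; ring) (by omega)
  exact ⟨w, x, hw, hx, rfl, rfl, ⟨y, hy⟩, z, hz⟩

theorem PythagoreanTriple.exists_mul_mul_mul_eq_sq_of_two_mul_eq_sq {P Q b a : ℤ}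
    (h : PythagoreanTriple P Q b) (hPQ : Int.gcd P Q = 1) (hb : 0 < b) (hP : 0 < P) (hQ : 0 < Q)
    (ha : 2 * P * Q = a ^ 2) :
    ∃ m n T, IsCoprime m n ∧ Odd (m + n) ∧ 0 < n ∧ n < m ∧
      m * n * (m - n) * (m + n) = T ^ 2 ∧ b = m ^ 2 + n ^ 2 := by
  wlog hP2 : P % 2 = 1 generalizing P Q
  · have hQ2 : Q % 2 = 1 := by rcases h.even_odd_of_coprime hPQ with h' | h' <;> omega
    exact this h.symm (by rwa [Int.gcd_comm]) hQ hP (by linear_combination ha) hQ2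
  obtain ⟨m, n, rfl, rfl, rfl, hmn, hpar, hm⟩ := h.coprime_classification' hPQ hP2 hb
  have hn : 0 < n := pos_of_mul_pos_right (by linarith : 0 < m * n) hm
  obtain ⟨T, rfl⟩ : (2 : ℤ) ∣ a :=
    Int.prime_two.dvd_of_dvd_pow (n := 2) ⟨2 * m * n * (m ^ 2 - n ^ 2), by rw [← ha]; ring⟩
  exact ⟨m, n, T, Int.isCoprime_iff_gcd_eq_one.mpr hmn, Int.odd_iff.mpr (by omega), hn,
    by nlinarith, by linarith, rfl⟩

def IsConcordantPair (a b : ℤ) : Prop :=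
  0 < a ∧ a < b ∧ Int.gcd a b = 1 ∧ (∃ c, a ^ 2 + b ^ 2 = c ^ 2) ∧ ∃ d, b ^ 2 - a ^ 2 = d ^ 2

namespace IsConcordantPair

theorem exists_sq_add_sq {a b : ℤ} (h : IsConcordantPair a b) :
    ∃ P Q, 0 < P ∧ 0 < Q ∧ Int.gcd P Q = 1 ∧ P ^ 2 + Q ^ 2 = b ^ 2 ∧ 2 * P * Q = a ^ 2 := by
  obtain ⟨ha, -, hab, ⟨c, hc⟩, ⟨d, hd⟩⟩ := h
  wlog hc0 : 0 ≤ c generalizing c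
  · exact this (-c) (by rw [hc]; ring) (by linarith)
  have hcd : Even (c + d) := by
    have : Even (c ^ 2 + d ^ 2) := ⟨b ^ 2, by linear_combination -hc - hd⟩
    simpa [Int.even_add, Int.even_pow] using this
  obtain ⟨P, hP⟩ := hcd
  obtain rfl : d = 2 * P - c := by linarith
  have hsum : P ^ 2 + (c - P) ^ 2 = b ^ 2 := by linarith
  have hprod : 2 * P * (c - P) = a ^ 2 := by linarith
  have hcop : IsCoprime (2 * P * (c - P)) (P ^ 2 + (c - P) ^ 2) := by
    rw [hsum, hprod]
    exact (Int.isCoprime_iff_gcd_eq_one.mpr hab).pow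
  have hPQ : IsCoprime P (c - P) := by
    have := hcop.of_mul_left_left.of_mul_left_right
    rwa [show P ^ 2 + (c - P) ^ 2 = (c - P) ^ 2 + P * P by ring, IsCoprime.add_mul_left_right_iff,
      IsCoprime.pow_right_iff two_pos] at this
  have hpos : 0 < P * (c - P) := by nlinarith
  exact ⟨P, c - P, by nlinarith, by nlinarith, Int.isCoprime_iff_gcd_eq_one.mp hPQ, hsum, hprod⟩

theorem exists_lt {a b : ℤ} (h : IsConcordantPair a b) :
    ∃ a' b', IsConcordantPair a' b' ∧ b' < b := by
  obtain ⟨P, Q, hP, hQ, hPQ, hsum, hprod⟩ := h.exists_sq_add_sq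
  have htri : PythagoreanTriple P Q b := by
    unfold PythagoreanTriple
    linear_combination hsum
  obtain ⟨m, n, T, hmn, hodd, hn, hnm, hT, rfl⟩ :=
    htri.exists_mul_mul_mul_eq_sq_of_two_mul_eq_sq hPQ (h.1.trans h.2.1) hP hQ hprod
  obtain ⟨w, x, hw, hx, rfl, rfl, ⟨y, hy⟩, z, hz⟩ :=
    Int.exists_sq_of_mul_mul_mul_eq_sq hmn hodd hn hnm hT
  refine ⟨x, w, ⟨hx, ?_, ?_, ⟨z, by rw [← hz]; ring⟩, y, hy⟩, by nlinarith⟩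
  · exact lt_of_pow_lt_pow_left₀ 2 hw.le hnm
  · exact Int.isCoprime_iff_gcd_eq_one.mp ((IsCoprime.pow_iff two_pos two_pos).mp hmn.symm)

end IsConcordantPair

theorem not_isConcordantPair (a b : ℤ) : ¬ IsConcordantPair a b := by
  induction hb : b.toNat using Nat.strong_induction_on generalizing a b with
  | _ n ih =>
    intro h
    obtain ⟨a', b', h', hb'⟩ := h.exists_lt
    have : 0 < b' := h'.1.trans h'.2.1
    exact ih _ (by omega) a' b' rfl h'

theorem stmt_15 :
    ¬ ∃ a b : ℤ, 0 < a ∧ a < b ∧ Int.gcd a b = 1 ∧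
      (∃ c : ℤ, a ^ 2 + b ^ 2 = c ^ 2) ∧ (∃ d : ℤ, b ^ 2 - a ^ 2 = d ^ 2) := by
  rintro ⟨a, b, h⟩
  exact not_isConcordantPair a b h
end
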